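/- arXiv:1911.05042 — 9 statements merged into one kernel-verified Lean document; each statement's English description precedes it below -/
import Mathlib

section
/- Let K be a contraction on a Hilbert space H (‖K‖ ≤ 1). Then ker(I + K) = ker(I + K*), and if ran(I + K) = H then -1 belongs to the resolvent set of K and of K*, and moreover ran(I + Re K) = H, where Re K = (K + K*)/2; in fact I + Re K is then uniformly positive since (I + K*)(I + K) + (I − K*K) = 2(I + Re K). -/
open scoped ComplexInnerProductSpace
open ContinuousLinearMap

lemma contraction_aux_ker {E : Type*} [NormedAddCommGroup E] [InnerProductSpace ℂ E]
    [CompleteSpace E] (K : E →L[ℂ] E) (hK : ‖K‖ ≤ 1) {x : E}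
    (hx : (1 + K) x = 0) : (1 + adjoint K) x = 0 := by
  have hKx : K x = -x := by
    have : x + K x = 0 := by simpa [add_apply] using hx
    linear_combination (norm := module) this
  have hnormadj : ‖adjoint K‖ ≤ 1 := by
    rw [← star_eq_adjoint, norm_star]; exact hK
  have h1 : ‖adjoint K x‖ ≤ ‖x‖ := by
    calc ‖adjoint K x‖ ≤ ‖adjoint K‖ * ‖x‖ := le_opNorm _ _
    _ ≤ 1 * ‖x‖ := by gcongr
    _ = ‖x‖ := one_mul _
  have h2 : (⟪adjoint K x, x⟫).re = -‖x‖ ^ 2 := by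
    rw [adjoint_inner_left, hKx, inner_neg_right]
    simpa using inner_self_eq_norm_sq (𝕜 := ℂ) x
  have h3 : ‖adjoint K x + x‖ ^ 2 ≤ 0 := by
    rw [norm_add_sq (𝕜 := ℂ)]
    simp only [RCLike.re_to_complex] at *
    nlinarith [norm_nonneg x, norm_nonneg (adjoint K x)]
  have h4 : adjoint K x + x = 0 := by
    have h5 : ‖adjoint K x + x‖ ^ 2 = 0 := le_antisymm h3 (by positivity)
    have hn : ‖adjoint K x + x‖ = 0 := by
      simpa using pow_eq_zero_iff (n := 2) (by norm_num) |>.mp h5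
    simpa using hn
  simp only [ContinuousLinearMap.add_apply, ContinuousLinearMap.one_apply]
  linear_combination (norm := module) h4

/-- For a contraction `K` on a Hilbert space: `ker (I + K) = ker (I + K*)`;
and if `ran (I + K) = H`, then `-1` is in the resolvent set of `K` and of `K*`,
`ran (I + Re K) = H` where `Re K = (K + K*)/2`, and `I + Re K` is uniformly positive;
indeed `(I + K*)(I + K) + (I − K*K) = 2 (I + Re K)`. -/
theorem contraction_ker_range_re
    {E : Type*} [NormedAddCommGroup E] [InnerProductSpace ℂ E] [CompleteSpace E]
    (K : E →L[ℂ] E) (hK : ‖K‖ ≤ 1) :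
    LinearMap.ker (((1 + K : E →L[ℂ] E) : E →ₗ[ℂ] E))
      = LinearMap.ker (((1 + ContinuousLinearMap.adjoint K : E →L[ℂ] E) : E →ₗ[ℂ] E)) ∧
    (LinearMap.range (((1 + K : E →L[ℂ] E) : E →ₗ[ℂ] E)) = ⊤ →
      (-1 : ℂ) ∉ spectrum ℂ K ∧
      (-1 : ℂ) ∉ spectrum ℂ (ContinuousLinearMap.adjoint K) ∧
      LinearMap.range (((1 + (2⁻¹ : ℂ) • (K + ContinuousLinearMap.adjoint K) : E →L[ℂ] E) : E →ₗ[ℂ] E)) = ⊤ ∧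
      (∃ c : ℝ, 0 < c ∧ ∀ x : E,
        c * ‖x‖ ^ 2
          ≤ (⟪(1 + (2⁻¹ : ℂ) • (K + ContinuousLinearMap.adjoint K) : E →L[ℂ] E) x, x⟫).re) ∧
      (1 + ContinuousLinearMap.adjoint K).comp (1 + K)
          + (1 - (ContinuousLinearMap.adjoint K).comp K)
        = (2 : ℂ) • ((1 + (2⁻¹ : ℂ) • (K + ContinuousLinearMap.adjoint K) : E →L[ℂ] E))) := by
  have hnormadj : ‖adjoint K‖ ≤ 1 := by rw [← star_eq_adjoint, norm_star]; exact hK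
  have hkerEq : LinearMap.ker (((1 + K : E →L[ℂ] E) : E →ₗ[ℂ] E))
      = LinearMap.ker (((1 + adjoint K : E →L[ℂ] E) : E →ₗ[ℂ] E)) := by
    ext x
    simp only [LinearMap.mem_ker, ContinuousLinearMap.coe_coe]
    constructor
    · exact contraction_aux_ker K hK
    · intro h
      have := contraction_aux_ker (adjoint K) hnormadj h
      rwa [adjoint_adjoint] at this
  refine ⟨hkerEq, fun hran => ?_⟩
  -- injectivity of 1 + adjoint K, hence of 1 + K
  have hkeradj : ∀ x : E, (1 + adjoint K) x = 0 → x = 0 := by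
    intro x hx
    obtain ⟨y, hy⟩ := LinearMap.range_eq_top.mp hran x
    have hinner : ⟪x, x⟫ = 0 := by
      calc ⟪x, x⟫ = ⟪(1 + K) y, x⟫ := by rw [show (1 + K : E →L[ℂ] E) y = x from hy]
      _ = ⟪y, (1 + adjoint K) x⟫ := by
          simp only [add_apply, ContinuousLinearMap.one_apply, inner_add_left, inner_add_right]
          rw [adjoint_inner_right]
      _ = 0 := by rw [hx, inner_zero_right]
    exact inner_self_eq_zero.mp hinner
  have hkerbot : LinearMap.ker (((1 + K : E →L[ℂ] E) : E →ₗ[ℂ] E)) = ⊥ := by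
    rw [hkerEq, LinearMap.ker_eq_bot']
    intro x hx
    exact hkeradj x hx
  have hbij : Function.Bijective (1 + K : E →L[ℂ] E) := by
    constructor
    · exact LinearMap.ker_eq_bot.mp hkerbot
    · exact LinearMap.range_eq_top.mp hran
  have hu : IsUnit (1 + K : E →L[ℂ] E) := isUnit_iff_bijective.mpr hbij
  have hu' : IsUnit (1 + adjoint K : E →L[ℂ] E) := by
    have : (1 + adjoint K : E →L[ℂ] E) = star (1 + K : E →L[ℂ] E) := by
      simp [star_add, star_eq_adjoint]
    rw [this]; exact hu.star
  have hspec : (-1 : ℂ) ∉ spectrum ℂ K := by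
    rw [spectrum.notMem_iff]
    have : (algebraMap ℂ (E →L[ℂ] E)) (-1) - K = -(1 + K) := by
      simp [Algebra.algebraMap_eq_smul_one]; abel
    rw [this]; exact hu.neg
  have hspec' : (-1 : ℂ) ∉ spectrum ℂ (adjoint K) := by
    rw [spectrum.notMem_iff]
    have : (algebraMap ℂ (E →L[ℂ] E)) (-1) - adjoint K = -(1 + adjoint K) := by
      simp [Algebra.algebraMap_eq_smul_one]; abel
    rw [this]; exact hu'.neg
  -- lower bound for 1 + K
  set e := ContinuousLinearEquiv.ofBijective (1 + K : E →L[ℂ] E) hkerbot hran with he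
  set M : ℝ := ‖(e.symm : E →L[ℂ] E)‖ with hM
  have hM0 : 0 ≤ M := norm_nonneg _
  have hlow : ∀ x : E, ‖x‖ ≤ (M + 1) * ‖(1 + K) x‖ := by
    intro x
    have h1 : e.symm ((1 + K) x) = x := ContinuousLinearEquiv.ofBijective_symm_apply_apply _ _ _ x
    calc ‖x‖ = ‖e.symm ((1 + K) x)‖ := by rw [h1]
    _ ≤ M * ‖(1 + K) x‖ := (e.symm : E →L[ℂ] E).le_opNorm _
    _ ≤ (M + 1) * ‖(1 + K) x‖ := by
        have := norm_nonneg ((1 + K : E →L[ℂ] E) x); nlinarith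
  clear_value M
  clear he hM
  clear_value e
  clear e
  set A : E →L[ℂ] E := 1 + (2⁻¹ : ℂ) • (K + adjoint K) with hA
  have hre : ∀ x : E, (⟪A x, x⟫).re = ‖x‖ ^ 2 + (⟪K x, x⟫).re := by
    intro x
    have hadj : (⟪adjoint K x, x⟫).re = (⟪K x, x⟫).re := by
      rw [adjoint_inner_left]
      simpa using inner_re_symm (𝕜 := ℂ) x (K x)
    simp only [hA, add_apply, ContinuousLinearMap.one_apply, smul_apply, inner_add_left, inner_smul_left]
    have : (⟪x, x⟫).re = ‖x‖ ^ 2 := by simpa using inner_self_eq_norm_sq (𝕜 := ℂ) x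
    simp [Complex.add_re, Complex.mul_re, this, hadj]
    rw [← Complex.ofReal_pow, Complex.ofReal_re]
    ring
  have hKx : ∀ x : E, ‖K x‖ ≤ ‖x‖ := fun x => by
    calc ‖K x‖ ≤ ‖K‖ * ‖x‖ := le_opNorm _ _
    _ ≤ 1 * ‖x‖ := by gcongr
    _ = ‖x‖ := one_mul _
  have hsq : ∀ x : E, ‖(1 + K) x‖ ^ 2 = ‖x‖ ^ 2 + 2 * (⟪K x, x⟫).re + ‖K x‖ ^ 2 := by
    intro x
    have : (1 + K : E →L[ℂ] E) x = x + K x := by simp [add_apply]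
    rw [this, norm_add_sq (𝕜 := ℂ)]
    have : (⟪x, K x⟫).re = (⟪K x, x⟫).re := by
      simpa using inner_re_symm (𝕜 := ℂ) x (K x)
    simp only [RCLike.re_to_complex] at *
    rw [this]
  have hcoer : ∀ x : E, ((M + 1) ^ 2 * 2)⁻¹ * ‖x‖ ^ 2 ≤ (⟪A x, x⟫).re := by
    intro x
    have h1 := hlow x
    have h2 := hre x
    have h3 := hsq x
    have h4 := hKx x
    have h5 : (0:ℝ) < (M + 1) ^ 2 * 2 := by positivity
    rw [inv_mul_le_iff₀ h5, h2]
    have h6 : 0 ≤ (M + 1) ^ 2 * (‖x‖ ^ 2 - ‖K x‖ ^ 2) :=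
      mul_nonneg (sq_nonneg _) (by nlinarith [norm_nonneg (K x), norm_nonneg x])
    have h7 : ‖x‖ ^ 2 ≤ (M + 1) ^ 2 * ‖(1 + K) x‖ ^ 2 := by
      nlinarith [mul_self_le_mul_self (norm_nonneg x) h1]
    have h8 : (M + 1) ^ 2 * 2 * (‖x‖ ^ 2 + (⟪K x, x⟫).re)
        = (M + 1) ^ 2 * ‖(1 + K) x‖ ^ 2 + (M + 1) ^ 2 * (‖x‖ ^ 2 - ‖K x‖ ^ 2) := by
      linear_combination (-(M + 1) ^ 2) * h3
    linarith
  have hc : (0:ℝ) < ((M + 1) ^ 2 * 2)⁻¹ := by positivity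
  -- range of A is ⊤
  have hAlow : ∀ x : E, ‖x‖ ≤ ((M + 1) ^ 2 * 2) * ‖A x‖ := by
    intro x
    rcases eq_or_ne x 0 with rfl | hx0
    · simp
    have hxpos : 0 < ‖x‖ := norm_pos_iff.mpr hx0
    have h1 := hcoer x
    have h2 : (⟪A x, x⟫).re ≤ ‖A x‖ * ‖x‖ := by
      calc (⟪A x, x⟫).re ≤ ‖(⟪A x, x⟫ : ℂ)‖ := Complex.re_le_norm _
      _ ≤ ‖A x‖ * ‖x‖ := norm_inner_le_norm _ _
    have h5 : (0:ℝ) < (M + 1) ^ 2 * 2 := by positivity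
    rw [inv_mul_le_iff₀ h5] at h1
    have := mul_le_mul_of_nonneg_left h2 (le_of_lt h5)
    nlinarith
  have hanti : AntilipschitzWith (⟨(M + 1) ^ 2 * 2, by positivity⟩ : NNReal) A :=
    ContinuousLinearMap.antilipschitz_of_bound A hAlow
  have hclosed : (LinearMap.range (A : E →ₗ[ℂ] E)).topologicalClosure = LinearMap.range (A : E →ₗ[ℂ] E) :=
    ContinuousLinearMap.closed_range_of_antilipschitz hanti
  have : CompleteSpace (LinearMap.range (A : E →ₗ[ℂ] E)) := hanti.completeSpace_range_clm
  have hranA : LinearMap.range (A : E →ₗ[ℂ] E) = ⊤ := by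
    rw [← Submodule.orthogonal_eq_bot_iff (K := LinearMap.range (A : E →ₗ[ℂ] E))]
    rw [Submodule.eq_bot_iff]
    intro y hy
    have h0 : ⟪A y, y⟫ = 0 := (Submodule.mem_orthogonal _ y).mp hy (A y) ⟨y, rfl⟩
    have hcy := hcoer y
    rw [h0] at hcy
    simp only [Complex.zero_re] at hcy
    have h1 : ((M + 1) ^ 2 * 2)⁻¹ * ‖y‖ ^ 2 = 0 :=
      le_antisymm hcy (mul_nonneg hc.le (sq_nonneg _))
    have hy2 : ‖y‖ ^ 2 = 0 := by
      rcases mul_eq_zero.mp h1 with h | h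
      · exact absurd h (ne_of_gt hc)
      · exact h
    have hn : ‖y‖ = 0 := by
      simpa using pow_eq_zero_iff (n := 2) (by norm_num) |>.mp hy2
    simpa using hn
  refine ⟨hspec, hspec', hranA, ⟨((M + 1) ^ 2 * 2)⁻¹, hc, hcoer⟩, ?_⟩
  ext x
  simp only [hA, ContinuousLinearMap.add_apply, ContinuousLinearMap.comp_apply,
    ContinuousLinearMap.sub_apply, ContinuousLinearMap.smul_apply, ContinuousLinearMap.one_apply,
    map_add]
  module
end

section
/- Let L be an unbounded selfadjoint operator with ker L = {0} and G a bounded selfadjoint operator with ker G = {0} and ran G ∩ dom L = {0}. Then the operator A defined by Au = L(I + iG)Lu on dom A = {u ∈ dom L : (I + iG)Lu ∈ dom L} satisfies dom A ∩ dom A* = {0}, where A* u = L(I − iG)Lu on dom A* = {u ∈ dom L : (I − iG)Lu ∈ dom L}. -/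
theorem Submodule.mem_of_add_smul_mem_of_sub_smul_mem {K V : Type*} [Field K] [NeZero (2 : K)]
    [AddCommGroup V] [Module K V] (p : Submodule K V) {c : K} (hc : c ≠ 0) {x y : V}
    (h₁ : x + c • y ∈ p) (h₂ : x - c • y ∈ p) : y ∈ p := by
  have h : (2 * c) • y ∈ p := by
    convert p.sub_mem h₁ h₂ using 1
    module
  exact (p.smul_mem_iff (mul_ne_zero two_ne_zero hc)).mp h

theorem domain_intersection_trivial_LGL_general
    {E : Type*} [NormedAddCommGroup E] [InnerProductSpace ℂ E]
    (L : E →ₗ.[ℂ] E)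
    (hker : ∀ u : L.domain, L u = 0 → (u : E) = 0)
    (G : E →L[ℂ] E)
    (hGker : ∀ x : E, G x = 0 → x = 0)
    (hGL : ∀ x : E, G x ∈ L.domain → G x = 0) :
    {u : E | ∃ hu : u ∈ L.domain, L ⟨u, hu⟩ + Complex.I • G (L ⟨u, hu⟩) ∈ L.domain} ∩
      {u : E | ∃ hu : u ∈ L.domain, L ⟨u, hu⟩ - Complex.I • G (L ⟨u, hu⟩) ∈ L.domain}
      = {0} := by
  ext u
  simp only [Set.mem_inter_iff, Set.mem_ofPred_eq, Set.mem_singleton_iff]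
  constructor
  · rintro ⟨⟨hu, hplus⟩, ⟨_, hminus⟩⟩
    have hGLu : G (L ⟨u, hu⟩) ∈ L.domain :=
      L.domain.mem_of_add_smul_mem_of_sub_smul_mem Complex.I_ne_zero hplus hminus
    exact hker ⟨u, hu⟩ (hGker _ (hGL _ hGLu))
  · rintro rfl
    have hL0 : L ⟨0, L.domain.zero_mem⟩ = 0 := L.map_zero
    exact ⟨⟨L.domain.zero_mem, by simp [hL0]⟩, ⟨L.domain.zero_mem, by simp [hL0]⟩⟩

/-- Let `L` be an unbounded selfadjoint operator with `ker L = {0}` and `G` a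
bounded selfadjoint operator with `ker G = {0}` and `ran G ∩ dom L = {0}`.  Then the m-sectorial
operator `A = L(I + iG)L`, with `dom A = {u ∈ dom L : (I + iG)Lu ∈ dom L}` and adjoint
`A* = L(I − iG)L` on `dom A* = {u ∈ dom L : (I − iG)Lu ∈ dom L}`, satisfies
`dom A ∩ dom A* = {0}`. -/
theorem domain_intersection_trivial_LGL
    {E : Type*} [NormedAddCommGroup E] [InnerProductSpace ℂ E] [CompleteSpace E]
    (L : E →ₗ.[ℂ] E) (hsa : IsSelfAdjoint L)
    (hunb : ¬ ∃ C : ℝ, ∀ u : L.domain, ‖L u‖ ≤ C * ‖(u : E)‖)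
    (hker : ∀ u : L.domain, L u = 0 → (u : E) = 0)
    (G : E →L[ℂ] E) (hG : IsSelfAdjoint G)
    (hGker : ∀ x : E, G x = 0 → x = 0)
    (hGL : ∀ x : E, G x ∈ L.domain → G x = 0) :
    {u : E | ∃ hu : u ∈ L.domain, L ⟨u, hu⟩ + Complex.I • G (L ⟨u, hu⟩) ∈ L.domain} ∩
      {u : E | ∃ hu : u ∈ L.domain, L ⟨u, hu⟩ - Complex.I • G (L ⟨u, hu⟩) ∈ L.domain}
      = {0} :=
  domain_intersection_trivial_LGL_general L hker G hGker hGL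
end

section
/- Let T be an unbounded m-accretive operator on a Hilbert space H such that H₁ := dom T ∩ dom T* is a closed subspace of H. Then the restriction T↾H₁ is a bounded operator from H₁ to H, and the complement H₂ = H ⊖ H₁ is infinite dimensional. -/
/-!
By the closed graph theorem, a closed operator is bounded on any closed subspace of its domain,
in particular on `H₁`. If `H₁ᗮ` were finite dimensional, then `T` would also be bounded on
`dom T ∩ H₁ᗮ`, and since every `u ∈ dom T` splits as `P u + (u - P u)` with `P` the orthogonal
projection onto `H₁ ⊆ dom T`, `T` would be bounded on all of its domain.
-/

open scoped ComplexInnerProductSpace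

namespace LinearPMap

section ClosedGraph

variable {𝕜 E F : Type*} [NontriviallyNormedField 𝕜] [NormedAddCommGroup E] [NormedSpace 𝕜 E]
  [NormedAddCommGroup F] [NormedSpace 𝕜 F] [CompleteSpace E] [CompleteSpace F]

theorem IsClosed.continuous_comp_inclusion {T : E →ₗ.[𝕜] F} (hT : T.IsClosed)
    {p : Submodule 𝕜 E} (hp : _root_.IsClosed (p : Set E)) (h : p ≤ T.domain) :
    Continuous (T.toFun ∘ₗ Submodule.inclusion h) := by
  have : CompleteSpace p := hp.completeSpace_coe
  refine LinearMap.continuous_of_isClosed_graph _ ?_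
  have hgraph : ((T.toFun ∘ₗ Submodule.inclusion h).graph : Set (p × F)) =
      Prod.map Subtype.val id ⁻¹' T.graph := by
    ext ⟨x, y⟩
    simp only [SetLike.mem_coe, LinearMap.mem_graph_iff, Set.mem_preimage, Prod.map_apply,
      id_eq, LinearPMap.mem_graph_iff]
    constructor
    · rintro rfl
      exact ⟨_, rfl, rfl⟩
    · rintro ⟨u, hu, rfl⟩
      obtain rfl : u = Submodule.inclusion h x := Subtype.ext hu
      rfl
  rw [hgraph]
  exact hT.preimage (by fun_prop)

end ClosedGraph

section Orthogonal

variable {𝕜 E F : Type*} [RCLike 𝕜] [NormedAddCommGroup E] [InnerProductSpace 𝕜 E]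
  [NormedAddCommGroup F] [NormedSpace 𝕜 F]

theorem continuous_toFun_of_finiteDimensional_orthogonal {T : E →ₗ.[𝕜] F}
    {K : Submodule 𝕜 E} [K.HasOrthogonalProjection] [FiniteDimensional 𝕜 Kᗮ]
    (hK : K ≤ T.domain) (hcont : Continuous (T.toFun ∘ₗ Submodule.inclusion hK)) :
    Continuous T.toFun := by
  have hfin : FiniteDimensional 𝕜 ↥(T.domain ⊓ Kᗮ) :=
    Submodule.finiteDimensional_of_le inf_le_right
  have hcontOrth : Continuous (T.toFun ∘ₗ Submodule.inclusion (inf_le_left (b := Kᗮ))) :=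
    LinearMap.continuous_of_finiteDimensional _
  let P : T.domain → K := fun u => K.orthogonalProjectionOnto u
  have hR : ∀ u : T.domain, (u : E) - P u ∈ T.domain ⊓ Kᗮ := fun u =>
    ⟨sub_mem u.2 (hK (P u).2), K.sub_starProjection_mem_orthogonal u⟩
  have hsplit : ⇑T.toFun = fun u => (T.toFun ∘ₗ Submodule.inclusion hK) (P u) +
      (T.toFun ∘ₗ Submodule.inclusion inf_le_left) ⟨_, hR u⟩ := by
    ext u
    rw [LinearMap.comp_apply, LinearMap.comp_apply, ← T.toFun.map_add]
    congr 1
    ext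
    simp [P]
  rw [hsplit]
  fun_prop

end Orthogonal

end LinearPMap

theorem restriction_bounded_and_complement_infinite_general
    {E : Type*} [NormedAddCommGroup E] [InnerProductSpace ℂ E] [CompleteSpace E]
    (T : E →ₗ.[ℂ] E)
    (hclosed : T.IsClosed)
    (hunb : ¬ ∃ C : ℝ, ∀ u : T.domain, ‖T u‖ ≤ C * ‖(u : E)‖)
    (hcl : IsClosed ((T.domain ⊓ T.adjoint.domain : Submodule ℂ E) : Set E)) :
    (∃ C : ℝ, ∀ u : T.domain, (u : E) ∈ T.adjoint.domain → ‖T u‖ ≤ C * ‖(u : E)‖) ∧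
    ¬ FiniteDimensional ℂ ((T.domain ⊓ T.adjoint.domain : Submodule ℂ E)ᗮ : Submodule ℂ E) := by
  set K : Submodule ℂ E := T.domain ⊓ T.adjoint.domain
  have : CompleteSpace K := hcl.completeSpace_coe
  have hK : K ≤ T.domain := inf_le_left
  have hcont := hclosed.continuous_comp_inclusion hcl hK
  obtain ⟨C, -, hC⟩ := SemilinearMapClass.bound_of_continuous _ hcont
  refine ⟨⟨C, fun u hu => hC ⟨u, u.2, hu⟩⟩, fun hfin => hunb ?_⟩
  obtain ⟨C', -, hC'⟩ := SemilinearMapClass.bound_of_continuous _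
    (LinearPMap.continuous_toFun_of_finiteDimensional_orthogonal hK hcont)
  exact ⟨C', hC'⟩

/-- Let `T` be an unbounded m-accretive operator on a Hilbert space `H` such
that `H₁ := dom T ∩ dom T*` is (topologically) closed in `H`.  Then the restriction of `T` to
`H₁` is bounded, and the orthogonal complement `H₂ = H ⊖ H₁` is infinite dimensional. -/
theorem restriction_bounded_and_complement_infinite
    {E : Type*} [NormedAddCommGroup E] [InnerProductSpace ℂ E] [CompleteSpace E]
    (T : E →ₗ.[ℂ] E)
    (hdense : Dense (T.domain : Set E))
    (hclosed : T.IsClosed)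
    (haccr : ∀ u : T.domain, 0 ≤ (⟪T u, (u : E)⟫).re)
    (haccr' : ∀ v : T.adjoint.domain, 0 ≤ (⟪T.adjoint v, (v : E)⟫).re)
    (hunb : ¬ ∃ C : ℝ, ∀ u : T.domain, ‖T u‖ ≤ C * ‖(u : E)‖)
    (hcl : IsClosed ((T.domain ⊓ T.adjoint.domain : Submodule ℂ E) : Set E)) :
    (∃ C : ℝ, ∀ u : T.domain, (u : E) ∈ T.adjoint.domain → ‖T u‖ ≤ C * ‖(u : E)‖) ∧
    ¬ FiniteDimensional ℂ ((T.domain ⊓ T.adjoint.domain : Submodule ℂ E)ᗮ : Submodule ℂ E) :=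
  restriction_bounded_and_complement_infinite_general T hclosed hunb hcl
end

section
/- Let T be an unbounded m-accretive operator in H with H₁ := dom T ∩ dom T* a proper closed subspace, H₂ := H ⊖ H₁. Then with respect to H = H₁ ⊕ H₂, T has a block matrix representation T = [[T₁, K₁₂],[K₂₁, T₂]] with dom T = H₁ ⊕ dom T₂, where T₁ is bounded accretive on H₁, K₁₂ and K₂₁ are bounded, and T₂ is m-accretive in H₂ with dom T₂ ∩ dom T₂* = {0}. -/
open scoped ComplexInnerProductSpace

set_option linter.unusedVariables false
set_option linter.unusedSectionVars false
set_option maxHeartbeats 1000000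

noncomputable section AuxBlock

variable {E : Type*} [NormedAddCommGroup E] [InnerProductSpace ℂ E] [CompleteSpace E]

lemma aux_cauchy_of_le {f g : ℕ → E} (hg : CauchySeq g)
    (h : ∀ n m, ‖f n - f m‖ ≤ ‖g n - g m‖) : CauchySeq f := by
  rw [Metric.cauchySeq_iff] at hg ⊢
  intro ε hε
  obtain ⟨N, hN⟩ := hg ε hε
  refine ⟨N, fun n hn m hm => ?_⟩
  have h2 := hN n hn m hm
  rw [dist_eq_norm] at h2 ⊢
  exact lt_of_le_of_lt (h n m) h2

lemma aux_bound_of_isClosed (T : E →ₗ.[ℂ] E) (hclosed : T.IsClosed)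
    (S : Submodule ℂ E) (hS : IsClosed (S : Set E)) (hle : S ≤ T.domain) :
    ∃ C : ℝ, 0 ≤ C ∧ ∀ u : T.domain, (u : E) ∈ S → ‖T u‖ ≤ C * ‖(u : E)‖ := by
  haveI : CompleteSpace S := hS.completeSpace_coe
  set f : S →ₗ[ℂ] E := T.toFun.comp (Submodule.inclusion hle) with hf
  have hfeq : ∀ (x : S), f x = T (Submodule.inclusion hle x) := fun x => rfl
  have hgraph : IsClosed (f.graph : Set (S × E)) := by
    have : (f.graph : Set (S × E)) =
        (fun p : S × E => ((p.1 : E), p.2)) ⁻¹' (T.graph : Set (E × E)) := by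
      ext p
      simp only [Set.mem_preimage, SetLike.mem_coe, LinearMap.mem_graph_iff,
        LinearPMap.mem_graph_iff]
      constructor
      · rintro h
        exact ⟨Submodule.inclusion hle p.1, rfl, h.symm⟩
      · rintro ⟨y, h1, h2⟩
        rw [hfeq]
        have : Submodule.inclusion hle p.1 = y := Subtype.ext h1.symm
        rw [this, h2]
    rw [this]
    exact (hclosed.preimage (by fun_prop))
  have hcont := f.continuous_of_isClosed_graph hgraph
  let g : S →L[ℂ] E := ⟨f, hcont⟩
  refine ⟨‖g‖, norm_nonneg g, fun u hu => ?_⟩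
  have h1 := g.le_opNorm ⟨(u : E), hu⟩
  have he : g ⟨(u : E), hu⟩ = T u := by
    show T (Submodule.inclusion hle ⟨(u : E), hu⟩) = T u
    congr 1
  rwa [he] at h1

lemma aux_adjoint_isClosed (T : E →ₗ.[ℂ] E) (hdense : Dense (T.domain : Set E)) :
    T.adjoint.IsClosed := by
  have hset : (T.adjoint.graph : Set (E × E)) =
      ⋂ x : T.domain, {p : E × E | ⟪p.2, (x : E)⟫ = ⟪p.1, T x⟫} := by
    ext p
    simp only [Set.mem_iInter, Set.mem_setOf_eq, SetLike.mem_coe, LinearPMap.mem_graph_iff]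
    constructor
    · rintro ⟨y, h1, h2⟩ x
      rw [← h1, ← h2]
      exact (LinearPMap.adjoint_isFormalAdjoint hdense) y x
    · intro h
      have hmem : p.1 ∈ T.adjoint.domain :=
        LinearPMap.mem_adjoint_domain_of_exists _ ⟨p.2, fun x => h x⟩
      exact ⟨⟨p.1, hmem⟩, rfl, LinearPMap.adjoint_apply_eq hdense _ (fun x => h x)⟩
  rw [LinearPMap.IsClosed, hset]
  exact isClosed_iInter fun x =>
    isClosed_eq (continuous_snd.inner continuous_const) (continuous_fst.inner continuous_const)


end AuxBlock

/-- Let `T` be an unbounded m-accretive operator with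
`H₁ := dom T ∩ dom T*` a proper closed subspace and `H₂ := H ⊖ H₁ = H₁ᗮ`.  Then `T` admits the
block matrix representation `T = [[T₁, K₁₂],[K₂₁, T₂]]` with `dom T = H₁ ⊕ dom T₂`, where
`T₁ = P₁T↾H₁` is bounded and accretive on `H₁` (in fact `T↾H₁` and `T*↾H₁` are bounded),
`K₂₁ = P₂T↾H₁` and `K₁₂` (the compression of `T` from `H₂` to `H₁`) are bounded, and
`T₂ = P₂T↾(dom T ∩ H₂)` is m-accretive in `H₂` with `dom T₂ ∩ dom T₂* = {0}`; moreover
`dim H₂ = ∞`. -/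
theorem block_representation_of_mAccretive
    {E : Type*} [NormedAddCommGroup E] [InnerProductSpace ℂ E] [CompleteSpace E]
    (T : E →ₗ.[ℂ] E)
    (hdense : Dense (T.domain : Set E))
    (hclosed : T.IsClosed)
    (haccr : ∀ u : T.domain, 0 ≤ (⟪T u, (u : E)⟫).re)
    (haccr' : ∀ v : T.adjoint.domain, 0 ≤ (⟪T.adjoint v, (v : E)⟫).re)
    (hunb : ¬ ∃ C : ℝ, ∀ u : T.domain, ‖T u‖ ≤ C * ‖(u : E)‖)
    (hcl : IsClosed ((T.domain ⊓ T.adjoint.domain : Submodule ℂ E) : Set E))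
    (hproper : (T.domain ⊓ T.adjoint.domain : Submodule ℂ E) ≠ ⊤) :
    -- `dim H₂ = ∞`
    (¬ FiniteDimensional ℂ
        ((T.domain ⊓ T.adjoint.domain : Submodule ℂ E)ᗮ : Submodule ℂ E)) ∧
    -- `T↾H₁` and `T*↾H₁` are bounded (hence so are `T₁ = P₁T↾H₁` and `K₂₁ = P₂T↾H₁`)
    (∃ C : ℝ, ∀ u : T.domain, (u : E) ∈ T.adjoint.domain → ‖T u‖ ≤ C * ‖(u : E)‖) ∧
    (∃ C : ℝ, ∀ v : T.adjoint.domain, (v : E) ∈ T.domain → ‖T.adjoint v‖ ≤ C * ‖(v : E)‖) ∧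
    -- `T₁` is accretive on `H₁`
    (∀ u : T.domain, (u : E) ∈ T.adjoint.domain → 0 ≤ (⟪T u, (u : E)⟫).re) ∧
    -- `K₁₂`, the compression of `T` from `H₂` to `H₁`, is bounded
    (∃ C : ℝ, ∀ u : T.domain,
      (u : E) ∈ (T.domain ⊓ T.adjoint.domain : Submodule ℂ E)ᗮ →
      ∀ w ∈ (T.domain ⊓ T.adjoint.domain : Submodule ℂ E), ‖⟪T u, w⟫‖ ≤ C * ‖(u : E)‖ * ‖w‖) ∧
    -- `dom T = H₁ ⊕ dom T₂` and `dom T* = H₁ ⊕ dom T₂*` (as direct sums inside `H`)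
    (T.domain = (T.domain ⊓ T.adjoint.domain : Submodule ℂ E)
        ⊔ (T.domain ⊓ (T.domain ⊓ T.adjoint.domain : Submodule ℂ E)ᗮ)) ∧
    (T.adjoint.domain = (T.domain ⊓ T.adjoint.domain : Submodule ℂ E)
        ⊔ (T.adjoint.domain ⊓ (T.domain ⊓ T.adjoint.domain : Submodule ℂ E)ᗮ)) ∧
    -- `T₂ = P₂T↾(dom T ∩ H₂)` is accretive in `H₂`
    (∀ u : T.domain, (u : E) ∈ (T.domain ⊓ T.adjoint.domain : Submodule ℂ E)ᗮ →
      0 ≤ (⟪T u, (u : E)⟫).re) ∧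
    -- maximality of `T₂`:  `ran (T₂ + 1) = H₂`, i.e. for every `y ∈ H₂` there is
    -- `u ∈ dom T ∩ H₂` with `P₂(T u) + u = y`, i.e. `T u + u - y ⊥ H₂`, i.e. `T u + u - y ∈ H₁`
    (∀ y ∈ (T.domain ⊓ T.adjoint.domain : Submodule ℂ E)ᗮ, ∃ u : T.domain,
      (u : E) ∈ (T.domain ⊓ T.adjoint.domain : Submodule ℂ E)ᗮ ∧
      T u + (u : E) - y ∈ (T.domain ⊓ T.adjoint.domain : Submodule ℂ E)) ∧
    -- `dom T₂ ∩ dom T₂* = {0}`:  if `h ∈ dom T₂` and the functional `x ↦ ⟪T₂ x, h⟫` is bounded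
    -- on `dom T₂` (i.e. `h ∈ dom T₂*`), then `h = 0`
    (∀ h : E, h ∈ (T.domain ⊓ T.adjoint.domain : Submodule ℂ E)ᗮ → h ∈ T.domain →
      (∃ C : ℝ, ∀ u : T.domain, (u : E) ∈ (T.domain ⊓ T.adjoint.domain : Submodule ℂ E)ᗮ →
        ‖⟪T u, h⟫‖ ≤ C * ‖(u : E)‖) → h = 0) := by
  set H1 : Submodule ℂ E := T.domain ⊓ T.adjoint.domain with hH1def
  haveI : CompleteSpace H1 := hcl.completeSpace_coe
  have hleT : H1 ≤ T.domain := inf_le_left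
  have hleT' : H1 ≤ T.adjoint.domain := inf_le_right
  have hfa : T.adjoint.IsFormalAdjoint T := LinearPMap.adjoint_isFormalAdjoint hdense
  have hfa' : T.IsFormalAdjoint T.adjoint := hfa.symm
  obtain ⟨C₁, hC₁0, hC₁⟩ := aux_bound_of_isClosed T hclosed H1 hcl hleT
  obtain ⟨C₂, hC₂0, hC₂⟩ := aux_bound_of_isClosed T.adjoint (aux_adjoint_isClosed T hdense) H1 hcl hleT'
  set Q : E →L[ℂ] E := H1.subtypeL.comp (Submodule.orthogonalProjectionOnto H1) with hQdef
  have hQmem : ∀ x : E, Q x ∈ H1 := fun x => (Submodule.orthogonalProjectionOnto H1 x).2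
  have hQo : ∀ x : E, x - Q x ∈ H1ᗮ := fun x => Submodule.sub_starProjection_mem_orthogonal (K := H1) x
  have hQnorm : ∀ x : E, ‖Q x‖ ≤ ‖x‖ ∧ ‖x - Q x‖ ≤ ‖x‖ := by
    intro x
    have h0 : ⟪Q x, x - Q x⟫ = 0 :=
      Submodule.inner_right_of_mem_orthogonal (hQmem x) (hQo x)
    have hp := norm_add_sq_eq_norm_sq_add_norm_sq_of_inner_eq_zero (Q x) (x - Q x) h0
    rw [add_sub_cancel] at hp
    constructor <;> nlinarith [norm_nonneg (Q x), norm_nonneg (x - Q x), norm_nonneg x]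
  -- key bound for ⟪T u, w⟫ with w ∈ H1
  have key : ∀ (u : T.domain) (w : E), w ∈ H1 → ‖⟪T u, w⟫‖ ≤ C₂ * ‖(u : E)‖ * ‖w‖ := by
    intro u w hw
    have h1 : ⟪T u, w⟫ = ⟪(u : E), T.adjoint ⟨w, hleT' hw⟩⟫ := hfa' u ⟨w, hleT' hw⟩
    rw [h1]
    calc ‖⟪(u : E), T.adjoint ⟨w, hleT' hw⟩⟫‖ ≤ ‖(u : E)‖ * ‖T.adjoint ⟨w, hleT' hw⟩‖ :=
          norm_inner_le_norm _ _
      _ ≤ ‖(u : E)‖ * (C₂ * ‖w‖) := by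
          have := hC₂ ⟨w, hleT' hw⟩ hw
          exact mul_le_mul_of_nonneg_left this (norm_nonneg _)
      _ = C₂ * ‖(u : E)‖ * ‖w‖ := by ring
  -- bound for ‖Q (T u)‖
  have hP1T : ∀ u : T.domain, ‖Q (T u)‖ ≤ C₂ * ‖(u : E)‖ := by
    intro u
    rcases eq_or_ne (Q (T u)) 0 with h | h
    · rw [h, norm_zero]; positivity
    · have hpos : 0 < ‖Q (T u)‖ := norm_pos_iff.mpr h
      have h1 : ⟪T u - Q (T u), Q (T u)⟫ = 0 :=
        Submodule.inner_left_of_mem_orthogonal (hQmem (T u)) (hQo (T u))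
      have h2 : ⟪T u, Q (T u)⟫ = ⟪Q (T u), Q (T u)⟫ := by
        have := inner_sub_left (𝕜 := ℂ) (T u) (Q (T u)) (Q (T u))
        rw [h1] at this
        linear_combination -this
      have h3 : (⟪T u, Q (T u)⟫).re = ‖Q (T u)‖ ^ 2 := by
        rw [h2, inner_self_eq_norm_sq_to_K]
        norm_cast
      have h4 : ‖Q (T u)‖ ^ 2 ≤ ‖⟪T u, Q (T u)⟫‖ := by
        rw [← h3]
        exact Complex.re_le_norm _
      have h5 := key u (Q (T u)) (hQmem (T u))
      nlinarith
  -- splitting of a domain element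
  have hsplit : ∀ u : T.domain, ∃ a b : T.domain, u = a + b ∧ (a : E) ∈ H1 ∧ (b : E) ∈ H1ᗮ ∧
      (a : E) = Q (u : E) ∧ (b : E) = (u : E) - Q (u : E) := by
    intro u
    refine ⟨⟨Q (u : E), hleT (hQmem _)⟩, u - ⟨Q (u : E), hleT (hQmem _)⟩, by abel,
      hQmem _, ?_, rfl, ?_⟩
    · exact hQo _
    · rfl
  -- Statement 2
  have st2 : ∃ C : ℝ, ∀ u : T.domain, (u : E) ∈ T.adjoint.domain → ‖T u‖ ≤ C * ‖(u : E)‖ :=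
    ⟨C₁, fun u hu => hC₁ u ⟨u.2, hu⟩⟩
  -- Statement 3
  have st3 : ∃ C : ℝ, ∀ v : T.adjoint.domain, (v : E) ∈ T.domain → ‖T.adjoint v‖ ≤ C * ‖(v : E)‖ :=
    ⟨C₂, fun v hv => hC₂ v ⟨hv, v.2⟩⟩
  -- Statement 6
  have st6 : T.domain = H1 ⊔ (T.domain ⊓ H1ᗮ) := by
    refine le_antisymm (fun x hx => ?_) (sup_le hleT inf_le_left)
    rw [Submodule.mem_sup]
    exact ⟨Q x, hQmem x, x - Q x, ⟨T.domain.sub_mem hx (hleT (hQmem x)), hQo x⟩, by abel⟩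
  -- Statement 7
  have st7 : T.adjoint.domain = H1 ⊔ (T.adjoint.domain ⊓ H1ᗮ) := by
    refine le_antisymm (fun x hx => ?_) (sup_le hleT' inf_le_left)
    rw [Submodule.mem_sup]
    exact ⟨Q x, hQmem x, x - Q x, ⟨T.adjoint.domain.sub_mem hx (hleT' (hQmem x)), hQo x⟩, by abel⟩
  -- Statement 1
  have st1 : ¬ FiniteDimensional ℂ (H1ᗮ : Submodule ℂ E) := by
    intro hfd
    haveI := hfd
    haveI : FiniteDimensional ℂ (T.domain ⊓ H1ᗮ : Submodule ℂ E) :=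
      Submodule.finiteDimensional_of_le inf_le_right
    set g : (T.domain ⊓ H1ᗮ : Submodule ℂ E) →ₗ[ℂ] E :=
      T.toFun.comp (Submodule.inclusion inf_le_left) with hg
    let gc : (T.domain ⊓ H1ᗮ : Submodule ℂ E) →L[ℂ] E := ⟨g, g.continuous_of_finiteDimensional⟩
    apply hunb
    refine ⟨C₁ + ‖gc‖, fun u => ?_⟩
    obtain ⟨a, b, hab, haH1, hbH2, haQ, hbQ⟩ := hsplit u
    have hbmem : (b : E) ∈ T.domain ⊓ H1ᗮ := ⟨b.2, hbH2⟩
    have hTb : T b = gc ⟨(b : E), hbmem⟩ := by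
      show T b = T (Submodule.inclusion inf_le_left ⟨(b : E), hbmem⟩)
      congr 1
    have h1 : ‖T a‖ ≤ C₁ * ‖(u : E)‖ := by
      refine (hC₁ a haH1).trans ?_
      have : ‖(a : E)‖ ≤ ‖(u : E)‖ := by rw [haQ]; exact (hQnorm _).1
      exact mul_le_mul_of_nonneg_left this hC₁0
    have h2 : ‖T b‖ ≤ ‖gc‖ * ‖(u : E)‖ := by
      rw [hTb]
      refine (gc.le_opNorm _).trans ?_
      have : ‖(b : E)‖ ≤ ‖(u : E)‖ := by rw [hbQ]; exact (hQnorm _).2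
      exact mul_le_mul_of_nonneg_left this (norm_nonneg gc)
    have h3 : T u = T a + T b := by rw [hab, T.map_add]
    calc ‖T u‖ = ‖T a + T b‖ := by rw [h3]
      _ ≤ ‖T a‖ + ‖T b‖ := norm_add_le _ _
      _ ≤ C₁ * ‖(u : E)‖ + ‖gc‖ * ‖(u : E)‖ := add_le_add h1 h2
      _ = (C₁ + ‖gc‖) * ‖(u : E)‖ := by ring
  -- Statement 10
  have st10 : ∀ h : E, h ∈ H1ᗮ → h ∈ T.domain →
      (∃ C : ℝ, ∀ u : T.domain, (u : E) ∈ H1ᗮ → ‖⟪T u, h⟫‖ ≤ C * ‖(u : E)‖) → h = 0 := by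
    rintro h hperp hdom ⟨C, hC⟩
    have hmem : h ∈ T.adjoint.domain := by
      rw [LinearPMap.mem_adjoint_domain_iff]
      refine AddMonoidHomClass.continuous_of_bound ((innerₛₗ ℂ h).comp T.toFun)
        (‖h‖ * C₁ + max C 0) (fun u => ?_)
      obtain ⟨a, b, hab, haH1, hbH2, haQ, hbQ⟩ := hsplit u
      have hTu : T u = T a + T b := by rw [hab, T.map_add]
      have hval : ((innerₛₗ ℂ h).comp T.toFun) u = ⟪h, T a⟫ + ⟪h, T b⟫ := by
        show ⟪h, T u⟫ = _
        rw [hTu, inner_add_right]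
      have h1 : ‖⟪h, T a⟫‖ ≤ ‖h‖ * C₁ * ‖(u : E)‖ := by
        refine (norm_inner_le_norm _ _).trans ?_
        have h1a := hC₁ a haH1
        have h1b : ‖(a : E)‖ ≤ ‖(u : E)‖ := by rw [haQ]; exact (hQnorm _).1
        have := h1a.trans (mul_le_mul_of_nonneg_left h1b hC₁0)
        calc ‖h‖ * ‖T a‖ ≤ ‖h‖ * (C₁ * ‖(u : E)‖) :=
              mul_le_mul_of_nonneg_left this (norm_nonneg h)
          _ = ‖h‖ * C₁ * ‖(u : E)‖ := by ring
      have h2 : ‖⟪h, T b⟫‖ ≤ max C 0 * ‖(u : E)‖ := by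
        rw [← norm_inner_symm]
        refine (hC b hbH2).trans ?_
        have h2b : ‖(b : E)‖ ≤ ‖(u : E)‖ := by rw [hbQ]; exact (hQnorm _).2
        calc C * ‖(b : E)‖ ≤ max C 0 * ‖(b : E)‖ :=
              mul_le_mul_of_nonneg_right (le_max_left _ _) (norm_nonneg _)
          _ ≤ max C 0 * ‖(u : E)‖ := mul_le_mul_of_nonneg_left h2b (le_max_right _ _)
      calc ‖((innerₛₗ ℂ h).comp T.toFun) u‖ ≤ ‖⟪h, T a⟫‖ + ‖⟪h, T b⟫‖ := by
            rw [hval]; exact norm_add_le _ _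
        _ ≤ ‖h‖ * C₁ * ‖(u : E)‖ + max C 0 * ‖(u : E)‖ := add_le_add h1 h2
        _ = (‖h‖ * C₁ + max C 0) * ‖(u : E)‖ := by ring
    have hH1m : h ∈ H1 := ⟨hdom, hmem⟩
    have := (Submodule.mem_orthogonal H1 h).mp hperp h hH1m
    exact inner_self_eq_zero.mp this
  -- Statement 9
  have st9 : ∀ y ∈ H1ᗮ, ∃ u : T.domain, (u : E) ∈ H1ᗮ ∧ T u + (u : E) - y ∈ H1 := by
    intro y hy
    set Φ : T.domain →ₗ[ℂ] E :=
      (T.toFun + T.domain.subtype) - ((Q : E →ₗ[ℂ] E).comp T.toFun) with hΦdef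
    have hΦ : ∀ u : T.domain, Φ u = T u + (u : E) - Q (T u) := fun u => rfl
    set D : Submodule ℂ T.domain := Submodule.comap T.domain.subtype H1ᗮ with hDdef
    set R : Submodule ℂ E := Submodule.map Φ D with hRdef
    have hRle : ∀ z ∈ R, z ∈ H1ᗮ := by
      rintro z ⟨v, hv, rfl⟩
      have h : Φ v = (T v - Q (T v)) + (v : E) := by rw [hΦ]; abel
      rw [h]
      exact H1ᗮ.add_mem (hQo _) hv
    have hlow : ∀ v : T.domain, (v : E) ∈ H1ᗮ → ‖(v : E)‖ ≤ ‖Φ v‖ := by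
      intro v hv
      have h0 : 0 ≤ (⟪T v - Q (T v), (v : E)⟫).re := by
        rw [inner_sub_left]
        have hz : ⟪Q (T v), (v : E)⟫ = 0 :=
          Submodule.inner_right_of_mem_orthogonal (hQmem _) hv
        rw [hz]
        simpa using haccr v
      have heq : Φ v = (T v - Q (T v)) + (v : E) := by rw [hΦ]; abel
      have hsq := norm_add_sq (𝕜 := ℂ) (T v - Q (T v)) ((v : E))
      simp only [RCLike.re_to_complex] at hsq
      rw [← heq] at hsq
      nlinarith [norm_nonneg (Φ v), norm_nonneg ((v : E)), norm_nonneg (T v - Q (T v))]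
    have hclR : IsClosed (R : Set E) := by
      refine IsSeqClosed.isClosed ?_
      intro xs z hxs hz
      have hmem : ∀ n, ∃ v : T.domain, v ∈ D ∧ Φ v = xs n := by
        intro n
        have h := hxs n
        rw [SetLike.mem_coe, hRdef, Submodule.mem_map] at h
        obtain ⟨v, hv1, hv2⟩ := h
        exact ⟨v, hv1, hv2⟩
      choose v hvD hvΦ using hmem
      have hvH2 : ∀ n, ((v n : E)) ∈ H1ᗮ := fun n => hvD n
      have hdiff : ∀ n m, ‖(v n : E) - (v m : E)‖ ≤ ‖xs n - xs m‖ := by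
        intro n m
        have h1 : ((v n - v m : T.domain) : E) ∈ H1ᗮ := by
          simpa using H1ᗮ.sub_mem (hvH2 n) (hvH2 m)
        have h2 := hlow (v n - v m) h1
        rw [map_sub Φ, hvΦ, hvΦ] at h2
        simpa using h2
      have hcx : CauchySeq xs := hz.cauchySeq
      have hcv : CauchySeq (fun n => (v n : E)) := aux_cauchy_of_le hcx hdiff
      obtain ⟨x, hx⟩ := cauchySeq_tendsto_of_complete hcv
      have hxH2 : x ∈ H1ᗮ :=
        (Submodule.isClosed_orthogonal H1).mem_of_tendsto hx
          (Filter.Eventually.of_forall fun n => hvH2 n)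
      have hdiffp : ∀ n m, ‖Q (T (v n)) - Q (T (v m))‖ ≤ ‖(C₂ • xs) n - (C₂ • xs) m‖ := by
        intro n m
        have h1 : Q (T (v n)) - Q (T (v m)) = Q (T (v n - v m)) := by
          rw [T.map_sub, map_sub]
        rw [h1]
        have h2 := hP1T (v n - v m)
        have h3 : ‖((v n - v m : T.domain) : E)‖ ≤ ‖xs n - xs m‖ := by
          have := hdiff n m
          simpa using this
        have h4 : ‖Q (T (v n - v m))‖ ≤ C₂ * ‖xs n - xs m‖ :=
          h2.trans (mul_le_mul_of_nonneg_left h3 hC₂0)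
        have h5 : ‖(C₂ • xs) n - (C₂ • xs) m‖ = C₂ * ‖xs n - xs m‖ := by
          show ‖C₂ • xs n - C₂ • xs m‖ = _
          rw [← smul_sub, norm_smul, Real.norm_eq_abs, abs_of_nonneg hC₂0]
        rw [h5]
        exact h4
      have hcp : CauchySeq (fun n => Q (T (v n))) :=
        aux_cauchy_of_le ((hz.const_smul C₂).cauchySeq) hdiffp
      obtain ⟨p, hp⟩ := cauchySeq_tendsto_of_complete hcp
      have hpH1 : p ∈ H1 :=
        hcl.mem_of_tendsto hp (Filter.Eventually.of_forall fun n => hQmem _)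
      have hTv : ∀ n, T (v n) = xs n - (v n : E) + Q (T (v n)) := by
        intro n; rw [← hvΦ n, hΦ]; abel
      have hTt : Filter.Tendsto (fun n => T (v n)) Filter.atTop (nhds (z - x + p)) := by
        have h := (hz.sub hx).add hp
        exact h.congr fun n => (hTv n).symm
      have hgr : (x, z - x + p) ∈ T.graph := by
        have hseq : Filter.Tendsto (fun n => ((v n : E), T (v n))) Filter.atTop
            (nhds (x, z - x + p)) := hx.prodMk_nhds hTt
        exact hclosed.mem_of_tendsto hseq
          (Filter.Eventually.of_forall fun n => T.mem_graph (v n))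
      rw [LinearPMap.mem_graph_iff] at hgr
      obtain ⟨u, hu1, hu2⟩ := hgr
      have hQp : Q (z - x + p) = p := by
        have h1 : Filter.Tendsto (fun n => Q (T (v n))) Filter.atTop (nhds (Q (z - x + p))) :=
          (Q.continuous.tendsto _).comp hTt
        exact tendsto_nhds_unique h1 hp
      rw [SetLike.mem_coe, hRdef, Submodule.mem_map]
      refine ⟨u, ?_, ?_⟩
      · show (u : E) ∈ H1ᗮ
        rw [hu1]
        exact hxH2
      · rw [hΦ, hu2, hu1, hQp]
        module
    haveI : CompleteSpace R := hclR.completeSpace_coe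
    set r : E := (Submodule.orthogonalProjectionOnto R y : E) with hrdef
    have hrR : r ∈ R := (Submodule.orthogonalProjectionOnto R y).2
    set s : E := y - r with hsdef
    have hsR : s ∈ Rᗮ := Submodule.sub_starProjection_mem_orthogonal (K := R) y
    have hsH2 : s ∈ H1ᗮ := H1ᗮ.sub_mem hy (hRle r hrR)
    have hip : ∀ v : T.domain, (v : E) ∈ H1ᗮ → ⟪T v, s⟫ = -⟪(v : E), s⟫ := by
      intro v hv
      have h0 : ⟪Φ v, s⟫ = 0 := (Submodule.mem_orthogonal R s).mp hsR _ ⟨v, hv, rfl⟩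
      rw [hΦ] at h0
      have hq : ⟪Q (T v), s⟫ = 0 := Submodule.inner_right_of_mem_orthogonal (hQmem _) hsH2
      rw [inner_sub_left, inner_add_left, hq] at h0
      linear_combination h0
    have hsdom : s ∈ T.adjoint.domain := by
      rw [LinearPMap.mem_adjoint_domain_iff]
      refine AddMonoidHomClass.continuous_of_bound ((innerₛₗ ℂ s).comp T.toFun)
        (‖s‖ * C₁ + ‖s‖) (fun u => ?_)
      obtain ⟨a, b, hab, haH1, hbH2, haQ, hbQ⟩ := hsplit u
      have hTu : T u = T a + T b := by rw [hab, T.map_add]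
      have hval : ((innerₛₗ ℂ s).comp T.toFun) u = ⟪s, T a⟫ + ⟪s, T b⟫ := by
        show ⟪s, T u⟫ = _
        rw [hTu, inner_add_right]
      have h1 : ‖⟪s, T a⟫‖ ≤ ‖s‖ * C₁ * ‖(u : E)‖ := by
        refine (norm_inner_le_norm _ _).trans ?_
        have h1a := hC₁ a haH1
        have h1b : ‖(a : E)‖ ≤ ‖(u : E)‖ := by rw [haQ]; exact (hQnorm _).1
        have h1c := h1a.trans (mul_le_mul_of_nonneg_left h1b hC₁0)
        calc ‖s‖ * ‖T a‖ ≤ ‖s‖ * (C₁ * ‖(u : E)‖) :=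
              mul_le_mul_of_nonneg_left h1c (norm_nonneg s)
          _ = ‖s‖ * C₁ * ‖(u : E)‖ := by ring
      have h2 : ‖⟪s, T b⟫‖ ≤ ‖s‖ * ‖(u : E)‖ := by
        have h2a : ⟪s, T b⟫ = -⟪s, (b : E)⟫ := by
          rw [← inner_conj_symm, hip b hbH2, map_neg, inner_conj_symm]
        rw [h2a, norm_neg]
        refine (norm_inner_le_norm _ _).trans ?_
        have h2b : ‖(b : E)‖ ≤ ‖(u : E)‖ := by rw [hbQ]; exact (hQnorm _).2
        exact mul_le_mul_of_nonneg_left h2b (norm_nonneg s)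
      calc ‖((innerₛₗ ℂ s).comp T.toFun) u‖ ≤ ‖⟪s, T a⟫‖ + ‖⟪s, T b⟫‖ := by
            rw [hval]; exact norm_add_le _ _
        _ ≤ ‖s‖ * C₁ * ‖(u : E)‖ + ‖s‖ * ‖(u : E)‖ := add_le_add h1 h2
        _ = (‖s‖ * C₁ + ‖s‖) * ‖(u : E)‖ := by ring
    set sd : T.adjoint.domain := ⟨s, hsdom⟩ with hsddef
    set w : E := T.adjoint sd + s with hwdef
    have hwperp : ∀ v : T.domain, (v : E) ∈ H1ᗮ → ⟪w, (v : E)⟫ = 0 := by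
      intro v hv
      have h1 : ⟪T.adjoint sd, (v : E)⟫ = ⟪s, T v⟫ := hfa sd v
      have h2 : ⟪s, T v⟫ = -⟪s, (v : E)⟫ := by
        rw [← inner_conj_symm, hip v hv, map_neg, inner_conj_symm]
      rw [hwdef, inner_add_left, h1, h2]
      ring
    have hwH1 : w ∈ H1 := by
      have h0 : w - Q w = 0 := by
        apply hdense.eq_zero_of_inner_left ℂ
        intro d0 hd0
        obtain ⟨d, rfl⟩ : ∃ d : T.domain, (d : E) = d0 := ⟨⟨d0, hd0⟩, rfl⟩
        obtain ⟨a, b, hab, haH1, hbH2, haQ, hbQ⟩ := hsplit d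
        have hd : ((d : T.domain) : E) = (a : E) + (b : E) := by rw [hab]; rfl
        rw [hd, inner_add_right]
        have h1 : ⟪w - Q w, (a : E)⟫ = 0 :=
          Submodule.inner_left_of_mem_orthogonal haH1 (hQo w)
        have h2 : ⟪w, (b : E)⟫ = 0 := hwperp b hbH2
        have h3 : ⟪Q w, (b : E)⟫ = 0 := Submodule.inner_right_of_mem_orthogonal (hQmem w) hbH2
        have h4 : ⟪w - Q w, (b : E)⟫ = 0 := by rw [inner_sub_left, h2, h3]; ring
        rw [h1, h4]
        ring
      have h5 : w = Q w := by rwa [sub_eq_zero] at h0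
      rw [h5]; exact hQmem w
    have hfin : 0 ≤ (⟪T.adjoint sd, s⟫).re := haccr' sd
    have hws : ⟪w, s⟫ = 0 := Submodule.inner_right_of_mem_orthogonal hwH1 hsH2
    have hTs : ⟪T.adjoint sd, s⟫ = -⟪s, s⟫ := by
      have h6 : (T.adjoint sd : E) = w - s := by rw [hwdef]; abel
      rw [h6, inner_sub_left, hws]
      ring
    have hs0 : s = 0 := by
      rw [hTs] at hfin
      have h7 : (⟪s, s⟫).re = ‖s‖ ^ 2 := by
        rw [inner_self_eq_norm_sq_to_K]; norm_cast
      have h8 : (-⟪s, s⟫ : ℂ).re = -‖s‖ ^ 2 := by rw [Complex.neg_re, h7]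
      rw [h8] at hfin
      have h9 : ‖s‖ = 0 := by nlinarith [norm_nonneg s]
      exact norm_eq_zero.mp h9
    have hyr : y = r := sub_eq_zero.mp hs0
    obtain ⟨v, hvD, hvΦ⟩ := hrR
    refine ⟨v, hvD, ?_⟩
    have h10 : T v + (v : E) - y = Q (T v) := by rw [hyr, ← hvΦ, hΦ]; abel
    rw [h10]; exact hQmem _
  exact ⟨st1, st2, st3, fun u _ => haccr u, ⟨C₂, fun u _ w hw => key u w hw⟩, st6, st7,
    fun u _ => haccr u, st9, st10⟩
end

section
/- Let S be a closed densely defined coercive sectorial operator (Re⟨Sf,f⟩ ≥ m‖f‖², m > 0). Then for x ∈ ℝ∖{0}, the operator T_{ix} := S_{ix} + ix·I is sectorial: |Im⟨T_{ix}g, g⟩| ≤ (k + |x|/m)·Re⟨T_{ix}g, g⟩ for all g ∈ dom S_{ix}, where k is the sectoriality constant of S. -/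
/-! Writing `g = f + φ` with `S* φ = ix φ`, one has `⟪S f, φ⟫ = ix ⟪f, φ⟫`, so the two cross terms
of `⟪S f + ix f, f + φ⟫` cancel and it equals `⟪S f, f⟫ - ix ‖f‖²`: the real part is that of
`⟪S f, f⟫`, and the imaginary part moves by `x ‖f‖²`, which coercivity bounds by
`(|x| / m) Re ⟪S f, f⟫`. -/

open scoped ComplexInnerProductSpace InnerProductSpace LinearPMap

namespace LinearPMap

variable {𝕜 E : Type*} [RCLike 𝕜] [NormedAddCommGroup E] [InnerProductSpace 𝕜 E]
  [CompleteSpace E] {S : E →ₗ.[𝕜] E}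

theorem inner_apply_eq_mul_inner_of_adjoint_apply_eq_smul (hS : Dense (S.domain : Set E))
    {φ : S†.domain} {μ : 𝕜} (hφ : S† φ = μ • (φ : E)) (f : S.domain) :
    ⟪S f, (φ : E)⟫_𝕜 = μ * ⟪(f : E), φ⟫_𝕜 := by
  have h := adjoint_isFormalAdjoint hS φ f
  rw [hφ, inner_smul_left] at h
  rw [← inner_conj_symm, ← h, map_mul, RCLike.conj_conj, inner_conj_symm]

end LinearPMap

open LinearPMap Complex in
theorem inner_add_I_smul_add_eq_of_adjoint_apply_eq_I_smul
    {E : Type*} [NormedAddCommGroup E] [InnerProductSpace ℂ E] [CompleteSpace E]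
    {S : E →ₗ.[ℂ] E} (hS : Dense (S.domain : Set E)) {x : ℝ} {φ : S†.domain}
    (hφ : S† φ = (I * x) • (φ : E)) (f : S.domain) :
    ⟪S f + (I * x) • (f : E), (f : E) + φ⟫ =
      ⟪S f, (f : E)⟫ - ((x * ‖(f : E)‖ ^ 2 : ℝ) : ℂ) * I := by
  have hconj : (starRingEnd ℂ) (I * x) = -(I * x) := by simp
  rw [inner_add_right, inner_add_left, inner_add_left, inner_smul_left, inner_smul_left,
    inner_self_eq_norm_sq_to_K, inner_apply_eq_mul_inner_of_adjoint_apply_eq_smul hS hφ, hconj,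
    RCLike.ofReal_eq_complex_ofReal]
  push_cast
  ring

theorem abs_sub_mul_le_of_coercive_sectorial {a b m k r x : ℝ} (hm : 0 < m) (hr : 0 ≤ r)
    (hco : m * r ≤ a) (hsec : |b| ≤ k * a) :
    |b - x * r| ≤ (k + |x| / m) * a := by
  have hshift : |x| * r ≤ |x| / m * a := by
    rw [div_mul_eq_mul_div, le_div_iff₀ hm, mul_assoc, mul_comm r]
    exact mul_le_mul_of_nonneg_left hco (abs_nonneg x)
  calc |b - x * r| ≤ |b| + |x| * r := by
        simpa [abs_mul, abs_of_nonneg hr] using abs_sub b (x * r)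
    _ ≤ k * a + |x| / m * a := add_le_add hsec hshift
    _ = (k + |x| / m) * a := by ring

theorem shifted_extension_sectorial_general
    {E : Type*} [NormedAddCommGroup E] [InnerProductSpace ℂ E] [CompleteSpace E]
    (S : E →ₗ.[ℂ] E)
    (hdense : Dense (S.domain : Set E))
    (m k : ℝ) (hm : 0 < m)
    (hco : ∀ f : S.domain, m * ‖(f : E)‖ ^ 2 ≤ (⟪S f, (f : E)⟫).re)
    (hsec : ∀ f : S.domain, |(⟪S f, (f : E)⟫).im| ≤ k * (⟪S f, (f : E)⟫).re)
    (x : ℝ)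
    (f : S.domain) (φ : E) (hφ : φ ∈ S.adjoint.domain)
    (heig : S.adjoint ⟨φ, hφ⟩ = (Complex.I * x) • φ) :
    |(⟪S f + (Complex.I * x) • (f : E), (f : E) + φ⟫).im|
      ≤ (k + |x| / m) * (⟪S f + (Complex.I * x) • (f : E), (f : E) + φ⟫).re := by
  rw [inner_add_I_smul_add_eq_of_adjoint_apply_eq_I_smul hdense (φ := ⟨φ, hφ⟩) heig f]
  simp only [Complex.sub_re, Complex.sub_im, Complex.mul_I_re, Complex.mul_I_im, Complex.ofReal_re,
    Complex.ofReal_im, neg_zero, sub_zero]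
  exact abs_sub_mul_le_of_coercive_sectorial hm (sq_nonneg ‖(f : E)‖) (hco f) (hsec f)

/-- Let `S` be a closed densely defined coercive sectorial operator
(`Re⟪S f, f⟫ ≥ m ‖f‖²` with `m > 0`, and `|Im⟪S f, f⟫| ≤ k Re⟪S f, f⟫`).  For
`x ∈ ℝ \ {0}`, the operator `T_{ix} := S_{ix} + ix·I` is sectorial:
`|Im⟪T_{ix} g, g⟫| ≤ (k + |x|/m) Re⟪T_{ix} g, g⟫` for all `g = f + φ ∈ dom S_{ix}`,
where `T_{ix} g = S f + ix f` for `f ∈ dom S`, `φ ∈ N_{ix} = ker(S* − ix)`. -/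
theorem shifted_extension_sectorial
    {E : Type*} [NormedAddCommGroup E] [InnerProductSpace ℂ E] [CompleteSpace E]
    (S : E →ₗ.[ℂ] E)
    (hdense : Dense (S.domain : Set E))
    (hclosed : S.IsClosed)
    (m k : ℝ) (hm : 0 < m)
    (hco : ∀ f : S.domain, m * ‖(f : E)‖ ^ 2 ≤ (⟪S f, (f : E)⟫).re)
    (hsec : ∀ f : S.domain, |(⟪S f, (f : E)⟫).im| ≤ k * (⟪S f, (f : E)⟫).re)
    (x : ℝ) (hx : x ≠ 0)
    (f : S.domain) (φ : E) (hφ : φ ∈ S.adjoint.domain)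
    (heig : S.adjoint ⟨φ, hφ⟩ = (Complex.I * x) • φ) :
    |(⟪S f + (Complex.I * x) • (f : E), (f : E) + φ⟫).im|
      ≤ (k + |x| / m) * (⟪S f + (Complex.I * x) • (f : E), (f : E) + φ⟫).re :=
  shifted_extension_sectorial_general S hdense m k hm hco hsec x f φ hφ heig
end

section
/- Let S be a non-negative closed densely defined symmetric operator and x ∈ ℝ∖{0}. Then dom S_{ix} ∩ dom S_{ix}* = ((S + ixI) dom S²) ⊕ N_{ix}; in particular, dom S_{ix} ∩ dom S_{ix}* = N_{ix} if and only if dom S² = {0}. -/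
open scoped ComplexInnerProductSpace

variable {E : Type*} [NormedAddCommGroup E] [InnerProductSpace ℂ E] [CompleteSpace E]

/-- Membership in the defect subspace `N_z = ker (S* - z)`. -/
def memDefectC (S : E →ₗ.[ℂ] E) (z : ℂ) (φ : E) : Prop :=
  ∃ hφ : φ ∈ S.adjoint.domain, S.adjoint ⟨φ, hφ⟩ = z • φ

/-- Membership in `dom S_z = dom S ∔ N_z`, where `S_z (f + φ) = S f - z φ`. -/
def memDomSz (S : E →ₗ.[ℂ] E) (z : ℂ) (g : E) : Prop :=
  ∃ (f : S.domain) (φ : E), memDefectC S z φ ∧ g = (f : E) + φ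

/-- Membership in `dom S_z*`: the functional relation defining the adjoint of `S_z`. -/
def memDomSzStar (S : E →ₗ.[ℂ] E) (z : ℂ) (h : E) : Prop :=
  ∃ w : E, ∀ (f : S.domain) (φ : E) (hφ : φ ∈ S.adjoint.domain),
    S.adjoint ⟨φ, hφ⟩ = z • φ → ⟪S f - z • φ, h⟫ = ⟪(f : E) + φ, w⟫

section Aux

variable {S : E →ₗ.[ℂ] E}

private lemma aux_defect_inner_right (hdense : Dense (S.domain : Set E)) {z : ℂ} {ψ : E}
    (hψ : ψ ∈ S.adjoint.domain) (heq : S.adjoint ⟨ψ, hψ⟩ = z • ψ) (f : S.domain) :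
    ⟪ψ, S f⟫ = (starRingEnd ℂ) z * ⟪ψ, (f : E)⟫ := by
  have h := LinearPMap.adjoint_isFormalAdjoint hdense ⟨ψ, hψ⟩ f
  rw [heq, inner_smul_left] at h
  exact h.symm

private lemma aux_defect_inner_left (hdense : Dense (S.domain : Set E)) {z : ℂ} {ψ : E}
    (hψ : ψ ∈ S.adjoint.domain) (heq : S.adjoint ⟨ψ, hψ⟩ = z • ψ) (f : S.domain) :
    ⟪S f, ψ⟫ = z * ⟪(f : E), ψ⟫ := by
  have h := aux_defect_inner_right hdense hψ heq f
  calc ⟪S f, ψ⟫ = (starRingEnd ℂ) ⟪ψ, S f⟫ := by rw [inner_conj_symm]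
    _ = (starRingEnd ℂ) ((starRingEnd ℂ) z * ⟪ψ, (f : E)⟫) := by rw [h]
    _ = z * ⟪(f : E), ψ⟫ := by rw [map_mul, Complex.conj_conj, inner_conj_symm]

private lemma aux_inner_real
    (hsymm : ∀ f g : S.domain, ⟪S f, (g : E)⟫ = ⟪(f : E), S g⟫) (f : S.domain) :
    (⟪S f, (f : E)⟫).im = 0 := by
  have h1 : (starRingEnd ℂ) ⟪S f, (f : E)⟫ = ⟪S f, (f : E)⟫ := by
    rw [inner_conj_symm]; exact (hsymm f f).symm
  exact Complex.conj_eq_iff_im.mp h1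

private lemma aux_eigen_zero
    (hsymm : ∀ f g : S.domain, ⟪S f, (g : E)⟫ = ⟪(f : E), S g⟫)
    {c : ℂ} (hc : c.im ≠ 0) (f : S.domain) (h : S f = c • (f : E)) : (f : E) = 0 := by
  have him := aux_inner_real hsymm f
  have hff : ⟪(f : E), (f : E)⟫ = ((‖(f : E)‖ ^ 2 : ℝ) : ℂ) := by
    rw [inner_self_eq_norm_sq_to_K]
    norm_cast
  rw [h, inner_smul_left, hff,
    Complex.mul_im, Complex.ofReal_re, Complex.ofReal_im, Complex.conj_re, Complex.conj_im,
    mul_zero, zero_add, neg_mul] at him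
  have h3 : ‖(f : E)‖ ^ 2 = 0 := by
    rcases mul_eq_zero.mp (neg_eq_zero.mp him) with h' | h'
    · exact absurd h' hc
    · exact h'
  have : ‖(f : E)‖ = 0 := by
    have := sq_eq_zero_iff.mp h3
    simpa using this
  simpa using this

private lemma aux_norm_sq
    (hsymm : ∀ f g : S.domain, ⟪S f, (g : E)⟫ = ⟪(f : E), S g⟫)
    {z : ℂ} (hzre : z.re = 0) (f : S.domain) :
    ‖S f + z • (f : E)‖ ^ 2 = ‖S f‖ ^ 2 + ‖z‖ ^ 2 * ‖(f : E)‖ ^ 2 := by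
  have him := aux_inner_real hsymm f
  have h := @norm_add_sq ℂ _ _ _ _ (S f) (z • (f : E))
  rw [inner_smul_right] at h
  have hre : RCLike.re (z * ⟪S f, (f : E)⟫) = 0 := by
    simp [RCLike.re_to_complex, Complex.mul_re, him, hzre]
  rw [hre, norm_smul] at h
  rw [h, mul_pow]
  ring

/-- Every vector orthogonal to the defect space `N_{ix}` lies in the range of `S + ix`. -/
private lemma aux_mem_range (hdense : Dense (S.domain : Set E)) (hclosed : S.IsClosed)
    (hsymm : ∀ f g : S.domain, ⟪S f, (g : E)⟫ = ⟪(f : E), S g⟫)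
    {z : ℂ} (hzre : z.re = 0) (hz : z ≠ 0) {v : E}
    (hv : ∀ ψ, memDefectC S z ψ → ⟪ψ, v⟫ = 0) :
    ∃ h : S.domain, v = S h + z • (h : E) := by
  have hconj : (starRingEnd ℂ) z = -z := by
    apply Complex.ext <;> simp [hzre]
  let L : S.domain →ₗ[ℂ] E := S.toFun + z • S.domain.subtype
  have hL : ∀ f : S.domain, L f = S f + z • (f : E) := fun f => rfl
  -- the range of `S + z` is closed
  haveI : CompleteSpace S.graph := hclosed.completeSpace_coe
  let M : (E × E) →L[ℂ] E := ContinuousLinearMap.snd ℂ E E + z • ContinuousLinearMap.fst ℂ E E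
  have hM : ∀ p : E × E, M p = p.2 + z • p.1 := fun p => rfl
  have hc0 : (0 : ℝ) < min 1 ‖z‖ := lt_min one_pos (norm_pos_iff.mpr hz)
  have key : ∀ p : E × E, p ∈ S.graph → min 1 ‖z‖ * ‖p‖ ≤ ‖M p‖ := by
    intro p hp
    obtain ⟨y, hy1, hy2⟩ := (LinearPMap.mem_graph_iff S).mp hp
    have hMp : M p = S y + z • (y : E) := by rw [hM, ← hy1, ← hy2]
    have hsq := aux_norm_sq hsymm hzre y
    have h1 : ‖p‖ = max ‖p.1‖ ‖p.2‖ := rfl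
    have hcx : min 1 ‖z‖ ≤ ‖z‖ := min_le_right _ _
    have hc1 : min 1 ‖z‖ ≤ 1 := min_le_left _ _
    have hsq' : (min 1 ‖z‖ * ‖p‖) ^ 2 ≤ ‖M p‖ ^ 2 := by
      rw [hMp, hsq, h1, ← hy1, ← hy2]
      rcases max_cases ‖(y : E)‖ ‖S y‖ with ⟨hmax, _⟩ | ⟨hmax, _⟩ <;> rw [hmax]
      · nlinarith [sq_nonneg ‖S y‖, norm_nonneg ((y : E)), norm_nonneg (S y),
          mul_le_mul_of_nonneg_right (mul_le_mul hcx hcx hc0.le (norm_nonneg z))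
            (sq_nonneg ‖(y : E)‖)]
      · nlinarith [norm_nonneg ((y : E)), norm_nonneg (S y), norm_nonneg z,
          mul_nonneg (sq_nonneg ‖z‖) (sq_nonneg ‖(y : E)‖),
          mul_le_mul_of_nonneg_right (mul_le_mul hc1 hc1 hc0.le zero_le_one)
            (sq_nonneg ‖S y‖)]
    have h2 : 0 ≤ min 1 ‖z‖ * ‖p‖ := by positivity
    have h3 := Real.sqrt_le_sqrt hsq'
    rwa [Real.sqrt_sq h2, Real.sqrt_sq (norm_nonneg _)] at h3
  have hA : AntilipschitzWith ⟨min 1 ‖z‖, hc0.le⟩⁻¹ (fun p : S.graph => M (p : E × E)) := by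
    apply AntilipschitzWith.of_le_mul_dist
    intro p q
    have hmem : ((p : E × E) - (q : E × E)) ∈ S.graph := sub_mem p.2 q.2
    have hk := key _ hmem
    rw [Subtype.dist_eq, dist_eq_norm, dist_eq_norm, ← map_sub]
    have hcoe : ((⟨min 1 ‖z‖, hc0.le⟩⁻¹ : NNReal) : ℝ) = (min 1 ‖z‖)⁻¹ := rfl
    rw [hcoe, le_inv_mul_iff₀ hc0]
    exact hk
  have hclosedRange : IsClosed (Set.range fun p : S.graph => M (p : E × E)) :=
    hA.isClosed_range (M.uniformContinuous.comp uniformContinuous_subtype_val)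
  have hrange_eq : (Set.range fun p : S.graph => M (p : E × E))
      = ((LinearMap.range L : Submodule ℂ E) : Set E) := by
    ext w
    constructor
    · rintro ⟨p, rfl⟩
      obtain ⟨y, hy1, hy2⟩ := (LinearPMap.mem_graph_iff S).mp p.2
      exact ⟨y, by show L y = M (p : E × E); rw [hL, hM, ← hy1, ← hy2]⟩
    · rintro ⟨y, rfl⟩
      exact ⟨⟨((y : E), S y), S.mem_graph y⟩, by show M ((y : E), S y) = L y; rw [hL, hM]⟩
  have hRc : IsClosed ((LinearMap.range L : Submodule ℂ E) : Set E) := hrange_eq ▸ hclosedRange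
  haveI : CompleteSpace (LinearMap.range L) := hRc.completeSpace_coe
  have horth : (LinearMap.range L)ᗮᗮ = LinearMap.range L := Submodule.orthogonal_orthogonal _
  have hvmem : v ∈ (LinearMap.range L)ᗮᗮ := by
    rw [Submodule.mem_orthogonal]
    intro u hu
    apply hv
    have huS : ∀ f : S.domain, ⟪(z • u : E), (f : E)⟫ = ⟪u, S f⟫ := by
      intro f
      have h0 : ⟪L f, u⟫ = 0 :=
        (Submodule.mem_orthogonal _ u).mp hu (L f) (LinearMap.mem_range_self L f)
      rw [hL, inner_add_left, inner_smul_left, hconj] at h0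
      have h1 : ⟪S f, u⟫ = z * ⟪(f : E), u⟫ := by linear_combination h0
      calc ⟪(z • u : E), (f : E)⟫ = (starRingEnd ℂ) z * ⟪u, (f : E)⟫ := inner_smul_left _ _ _
        _ = (starRingEnd ℂ) (z * ⟪(f : E), u⟫) := by
            rw [map_mul, inner_conj_symm]
        _ = (starRingEnd ℂ) ⟪S f, u⟫ := by rw [h1]
        _ = ⟪u, S f⟫ := by rw [inner_conj_symm]
    have humem : u ∈ S.adjoint.domain :=
      LinearPMap.mem_adjoint_domain_of_exists u ⟨z • u, huS⟩
    exact ⟨humem, LinearPMap.adjoint_apply_eq hdense ⟨u, humem⟩ huS⟩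
  rw [horth] at hvmem
  obtain ⟨h, hh⟩ := hvmem
  exact ⟨h, by rw [← hh, hL]⟩

end Aux

/-- Let `S` be a non-negative closed densely defined symmetric operator and
`x ∈ ℝ \ {0}`.  Then `dom S_{ix} ∩ dom S_{ix}* = ((S + ix) dom S²) ⊕ N_{ix}`; in particular,
`dom S_{ix} ∩ dom S_{ix}* = N_{ix}` if and only if `dom S² = {0}`. -/
theorem domain_intersection_Six
    (S : E →ₗ.[ℂ] E)
    (hdense : Dense (S.domain : Set E))
    (hclosed : S.IsClosed)
    (hsymm : ∀ f g : S.domain, ⟪S f, (g : E)⟫ = ⟪(f : E), S g⟫)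
    (hpos : ∀ f : S.domain, 0 ≤ (⟪S f, (f : E)⟫).re)
    (x : ℝ) (hx : x ≠ 0) :
    ({g : E | memDomSz S (Complex.I * x) g} ∩ {h : E | memDomSzStar S (Complex.I * x) h}
        = {g : E | ∃ (f : S.domain) (_ : S f ∈ S.domain) (φ : E),
            memDefectC S (Complex.I * x) φ ∧ g = S f + (Complex.I * x) • (f : E) + φ}) ∧
    (({g : E | memDomSz S (Complex.I * x) g} ∩ {h : E | memDomSzStar S (Complex.I * x) h}
        = {φ : E | memDefectC S (Complex.I * x) φ})
      ↔ ∀ f : S.domain, S f ∈ S.domain → (f : E) = 0) := by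
  set z : ℂ := Complex.I * x with hzdef
  have hz : z ≠ 0 := by
    rw [hzdef]
    exact mul_ne_zero Complex.I_ne_zero (Complex.ofReal_ne_zero.mpr hx)
  have hconj : (starRingEnd ℂ) z = -z := by
    rw [hzdef, map_mul, Complex.conj_I, Complex.conj_ofReal]; ring
  have hzim : z.im ≠ 0 := by
    rw [hzdef]; simpa using hx
  have hle : S ≤ S.adjoint := LinearPMap.IsFormalAdjoint.le_adjoint hdense hsymm
  have hm0 : (0 : E) ∈ S.adjoint.domain := zero_mem _
  have heq0 : S.adjoint ⟨0, hm0⟩ = z • (0 : E) := by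
    rw [smul_zero]
    exact S.adjoint.map_zero
  have hpart1 : ({g : E | memDomSz S z g} ∩ {h : E | memDomSzStar S z h}
      = {g : E | ∃ (f : S.domain) (_ : S f ∈ S.domain) (φ : E),
          memDefectC S z φ ∧ g = S f + z • (f : E) + φ}) := by
    ext g
    simp only [Set.mem_inter_iff, Set.mem_setOf_eq]
    constructor
    · rintro ⟨⟨f0, φ0, ⟨hφ0, hφ0eq⟩, hg⟩, w, hw⟩
      have ha : ∀ u : S.domain, ⟪S u, g⟫ = ⟪(u : E), w⟫ := fun u => by
        simpa using hw u 0 hm0 heq0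
      have hb : ∀ ψ : E, ∀ hψ : ψ ∈ S.adjoint.domain, S.adjoint ⟨ψ, hψ⟩ = z • ψ →
          z * ⟪ψ, g⟫ = ⟪ψ, w⟫ := by
        intro ψ hψ heqψ
        have h := hw 0 ψ hψ heqψ
        rw [S.map_zero, zero_sub, inner_neg_left, inner_smul_left, hconj] at h
        simpa using h
      have hwval : w = S f0 + z • φ0 := by
        apply hdense.eq_of_inner_right ℂ
        intro u' hu'
        obtain ⟨u, rfl⟩ : ∃ u : S.domain, (u : E) = u' := ⟨⟨u', hu'⟩, rfl⟩
        rw [← ha u, hg, inner_add_right, inner_add_right, inner_smul_right, hsymm u f0,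
          aux_defect_inner_left hdense hφ0 hφ0eq u]
      have hperp : ∀ ψ, memDefectC S z ψ → ⟪ψ, (f0 : E)⟫ = 0 := by
        rintro ψ ⟨hψ, heqψ⟩
        have h := hb ψ hψ heqψ
        rw [hg, hwval, inner_add_right, inner_add_right, inner_smul_right,
          aux_defect_inner_right hdense hψ heqψ f0, hconj] at h
        have h2 : (2 * z) * ⟪ψ, (f0 : E)⟫ = 0 := by linear_combination h
        exact (mul_eq_zero.mp h2).resolve_left (mul_ne_zero two_ne_zero hz)
      obtain ⟨h, hh⟩ := aux_mem_range hdense hclosed hsymm (by rw [hzdef]; simp) hz hperp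
      have hf2 : S h ∈ S.domain := by
        have hcoe : ((f0 - z • h : S.domain) : E) = S h := by
          push_cast
          rw [hh]
          abel
        rw [← hcoe]
        exact Submodule.coe_mem _
      exact ⟨h, hf2, φ0, ⟨hφ0, hφ0eq⟩, by rw [hg, hh]⟩
    · rintro ⟨f, hf2, φ, ⟨hφ, hφeq⟩, hg⟩
      set f0 : S.domain := ⟨S f, hf2⟩ + z • f with hf0def
      have hf0coe : (f0 : E) = S f + z • (f : E) := rfl
      have hψf0 : ∀ ψ : E, ∀ hψ : ψ ∈ S.adjoint.domain, S.adjoint ⟨ψ, hψ⟩ = z • ψ →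
          ⟪ψ, (f0 : E)⟫ = 0 := by
        intro ψ hψ heqψ
        rw [hf0coe, inner_add_right, inner_smul_right,
          aux_defect_inner_right hdense hψ heqψ f, hconj]
        ring
      constructor
      · exact ⟨f0, φ, ⟨hφ, hφeq⟩, by rw [hg, hf0coe]⟩
      · refine ⟨S f0 + z • φ, ?_⟩
        intro u ψ hψ heqψ
        rw [hg, ← hf0coe]
        simp only [inner_sub_left, inner_add_left, inner_add_right, inner_smul_left,
          inner_smul_right]
        rw [hsymm u f0, aux_defect_inner_left hdense hφ hφeq u,
          aux_defect_inner_right hdense hψ heqψ f0, hconj, hψf0 ψ hψ heqψ]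
        ring
  refine ⟨hpart1, ?_⟩
  constructor
  · intro hA f hf2
    have hgB : (S f + z • (f : E)) ∈ {g : E | ∃ (f : S.domain) (_ : S f ∈ S.domain) (φ : E),
        memDefectC S z φ ∧ g = S f + z • (f : E) + φ} :=
      ⟨f, hf2, 0, ⟨hm0, heq0⟩, by simp⟩
    rw [← hpart1, hA] at hgB
    set f0 : S.domain := ⟨S f, hf2⟩ + z • f with hf0def
    obtain ⟨hφ, heq⟩ := hgB
    have h1 : S f0 = S.adjoint ⟨(S f + z • (f : E) : E), hφ⟩ := hle.2 rfl
    have h2 : S f0 = z • (f0 : E) := h1.trans heq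
    have hf00 : (f0 : E) = 0 := aux_eigen_zero hsymm hzim f0 h2
    have hSf : S f = (-z) • (f : E) := by
      have h3 : S f + z • (f : E) = 0 := hf00
      rw [neg_smul]
      exact eq_neg_of_add_eq_zero_left h3
    exact aux_eigen_zero hsymm (by simpa using hzim) f hSf
  · intro hzero
    rw [hpart1]
    ext g
    simp only [Set.mem_setOf_eq]
    constructor
    · rintro ⟨f, hf2, φ, hdef, hg⟩
      have hf0 : f = 0 := Subtype.ext (hzero f hf2)
      rw [hf0] at hg
      rw [S.map_zero] at hg
      simpa [hg] using hdef
    · intro hdef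
      refine ⟨0, ?_, g, hdef, by rw [S.map_zero]; simp⟩
      rw [S.map_zero]
      exact zero_mem _
end

section
/- Let A be a non-negative selfadjoint operator and B a symmetric operator with dom A^{1/2} ⊆ dom B on a Hilbert space H. Then T := A + iB with dom T = dom A is m-accretive, T* = A − iB with dom T* = dom A, and for every a < min σ(A) the operator T − aI is m-sectorial; in particular (T+T*)/2 = A and (T−T*)/(2i) = B↾dom A. -/
open scoped ComplexInnerProductSpace
noncomputable section
namespace AuxAiB
variable {E : Type*} [NormedAddCommGroup E] [InnerProductSpace ℂ E] [CompleteSpace E]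

lemma symm_of_sa {R : E →ₗ.[ℂ] E} (hR : IsSelfAdjoint R) (u v : R.domain) :
    ⟪R u, (v : E)⟫ = ⟪(u : E), R v⟫ := by
  have hd := hR.dense_domain
  rw [LinearPMap.isSelfAdjoint_def] at hR
  have h := LinearPMap.adjoint_isFormalAdjoint hd
  rw [hR] at h
  exact h u v

lemma isClosed_graph_of_sa {R : E →ₗ.[ℂ] E} (hR : IsSelfAdjoint R) :
    IsClosed (R.graph : Set (E × E)) := by
  have hd := hR.dense_domain
  have hR' : LinearPMap.adjoint R = R := hR
  have hset : (R.graph : Set (E × E)) =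
      {p : E × E | ∀ v : R.domain, ⟪p.2, (v : E)⟫ = ⟪p.1, R v⟫} := by
    ext p
    constructor
    · intro hp v
      obtain ⟨x, hx1, hx2⟩ := (LinearPMap.mem_graph_iff R).mp hp
      rw [← hx1, ← hx2]
      exact symm_of_sa hR x v
    · intro hp
      have hmem : p.1 ∈ (LinearPMap.adjoint R).domain :=
        LinearPMap.mem_adjoint_domain_of_exists _ ⟨p.2, fun x => hp x⟩
      have hval : (LinearPMap.adjoint R) ⟨p.1, hmem⟩ = p.2 :=
        LinearPMap.adjoint_apply_eq hd _ (fun x => hp x)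
      have hg := LinearPMap.mem_graph (LinearPMap.adjoint R) ⟨p.1, hmem⟩
      have hgr : (LinearPMap.adjoint R).graph = R.graph := by rw [hR']
      rw [hval, hgr] at hg
      exact hg
  rw [hset]
  have : {p : E × E | ∀ v : R.domain, ⟪p.2, (v : E)⟫ = ⟪p.1, R v⟫} =
      ⋂ v : R.domain, {p : E × E | ⟪p.2, (v : E)⟫ = ⟪p.1, R v⟫} := by
    ext p; simp [Set.mem_iInter]
  rw [this]
  exact isClosed_iInter fun v =>
    isClosed_eq (Continuous.inner continuous_snd continuous_const)
      (Continuous.inner continuous_fst continuous_const)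


set_option maxHeartbeats 4000000 in
set_option synthInstance.maxHeartbeats 400000 in
lemma core {B R : E →ₗ.[ℂ] E} (hR : IsSelfAdjoint R)
    (hBsymm : ∀ u v : B.domain, ⟪B u, (v : E)⟫ = ⟪(u : E), B v⟫)
    (hRB : R.domain ≤ B.domain) :
    (∀ y : E, ∃ (u : E) (hu1 : u ∈ R.domain) (hu2 : R ⟨u, hu1⟩ ∈ R.domain),
       R ⟨R ⟨u, hu1⟩, hu2⟩ + Complex.I • B ⟨u, hRB hu1⟩ + u = y) ∧
    (∃ M : ℝ, 0 ≤ M ∧ ∀ (u : E) (hu : u ∈ R.domain),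
       ‖B ⟨u, hRB hu⟩‖ * ‖u‖ ≤ M * (‖u‖ ^ 2 + ‖R ⟨u, hu⟩‖ ^ 2)) := by
  classical
  have hd := hR.dense_domain
  have hR' : LinearPMap.adjoint R = R := hR
  set V : Submodule ℂ (WithLp 2 (E × E)) :=
    R.graph.comap (WithLp.linearEquiv 2 ℂ (E × E) : WithLp 2 (E × E) →ₗ[ℂ] E × E) with hV
  have hVmem : ∀ p : WithLp 2 (E × E), p ∈ V ↔ (p.fst, p.snd) ∈ R.graph := by
    intro p
    rw [hV, Submodule.mem_comap]
    exact Iff.rfl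
  -- V is closed, hence complete
  have hVclosed : IsClosed (V : Set (WithLp 2 (E × E))) := by
    have : (V : Set (WithLp 2 (E × E))) =
        (WithLp.prodContinuousLinearEquiv 2 ℂ E E) ⁻¹' (R.graph : Set (E × E)) := by
      ext p
      rw [Set.mem_preimage, SetLike.mem_coe, hVmem p]
      exact Iff.rfl

    rw [this]
    exact (isClosed_graph_of_sa hR).preimage (WithLp.prodContinuousLinearEquiv 2 ℂ E E).continuous
  haveI : CompleteSpace V := hVclosed.completeSpace_coe
  -- structure of elements of V
  have hVspec : ∀ p : V, ∃ h : (p : WithLp 2 (E × E)).fst ∈ R.domain,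
      R ⟨(p : WithLp 2 (E × E)).fst, h⟩ = (p : WithLp 2 (E × E)).snd := by
    intro p
    have hp := (hVmem _).mp p.2
    obtain ⟨x, hx1, hx2⟩ := (LinearPMap.mem_graph_iff R).mp hp
    replace hx1 : (x : E) = (p : WithLp 2 (E × E)).fst := hx1
    refine ⟨hx1 ▸ x.2, ?_⟩
    have hxx : (⟨(p : WithLp 2 (E × E)).fst, hx1 ▸ x.2⟩ : R.domain) = x :=
      Subtype.ext hx1.symm
    rw [hxx, hx2]
  -- lift of an element of the domain of R to V
  have hlift : ∀ v : R.domain,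
      ((WithLp.equiv 2 (E × E)).symm ((v : E), R v)) ∈ V := by
    intro v
    rw [hVmem]
    simpa using R.mem_graph v

  -- first coordinate as a continuous linear map on V
  set fstL : V →L[ℂ] E :=
    (ContinuousLinearMap.fst ℂ E E).comp
      (((WithLp.prodContinuousLinearEquiv 2 ℂ E E : WithLp 2 (E × E) →L[ℂ] E × E)).comp
        (Submodule.subtypeL V)) with hfstL
  have hfstL_apply : ∀ p : V, fstL p = (p : WithLp 2 (E × E)).fst := fun p => rfl
  -- norm and inner product formulas on V
  have hnorm : ∀ p : V, ‖p‖ ^ 2 =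
      ‖(p : WithLp 2 (E × E)).fst‖ ^ 2 + ‖(p : WithLp 2 (E × E)).snd‖ ^ 2 := by
    intro p
    have : ‖p‖ = ‖(p : WithLp 2 (E × E))‖ := rfl
    rw [this, WithLp.prod_norm_sq_eq_of_L2]
  have hinner : ∀ p q : V, (⟪p, q⟫ : ℂ) =
      ⟪(p : WithLp 2 (E × E)).fst, (q : WithLp 2 (E × E)).fst⟫
        + ⟪(p : WithLp 2 (E × E)).snd, (q : WithLp 2 (E × E)).snd⟫ := by
    intro p q
    rw [Submodule.coe_inner, WithLp.prod_inner_apply]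
    rfl
  have hfst_le : ∀ p : V, ‖fstL p‖ ≤ ‖p‖ := by
    intro p
    have h2 := hnorm p
    have h3 : ‖fstL p‖ ^ 2 ≤ ‖p‖ ^ 2 := by
      rw [h2, hfstL_apply]
      nlinarith [sq_nonneg ‖(p : WithLp 2 (E × E)).snd‖]
    nlinarith [norm_nonneg (fstL p), norm_nonneg p]
  have hmem1 : ∀ p : V, (p : WithLp 2 (E × E)).fst ∈ R.domain := fun p => (hVspec p).choose
  have hsnd : ∀ p : V, R ⟨(p : WithLp 2 (E × E)).fst, hmem1 p⟩ = (p : WithLp 2 (E × E)).snd :=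
    fun p => (hVspec p).choose_spec
  -- B as a linear map on V
  set Bfun : V →ₗ[ℂ] E :=
    { toFun := fun p => B ⟨(p : WithLp 2 (E × E)).fst, hRB (hmem1 p)⟩
      map_add' := by
        intro p q
        have h : (⟨(((p + q : V) : WithLp 2 (E × E))).fst, hRB (hmem1 (p + q))⟩ : B.domain)
            = ⟨(p : WithLp 2 (E × E)).fst, hRB (hmem1 p)⟩
              + ⟨(q : WithLp 2 (E × E)).fst, hRB (hmem1 q)⟩ := by
          apply Subtype.ext
          simp [WithLp.add_fst]
        show B ⟨(((p + q : V) : WithLp 2 (E × E))).fst, hRB (hmem1 (p + q))⟩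
            = B ⟨(p : WithLp 2 (E × E)).fst, hRB (hmem1 p)⟩
              + B ⟨(q : WithLp 2 (E × E)).fst, hRB (hmem1 q)⟩
        rw [h, B.map_add]
      map_smul' := by
        intro c p
        have h : (⟨(((c • p : V) : WithLp 2 (E × E))).fst, hRB (hmem1 (c • p))⟩ : B.domain)
            = c • ⟨(p : WithLp 2 (E × E)).fst, hRB (hmem1 p)⟩ := by
          apply Subtype.ext
          simp [WithLp.smul_fst]
        show B ⟨(((c • p : V) : WithLp 2 (E × E))).fst, hRB (hmem1 (c • p))⟩
            = c • B ⟨(p : WithLp 2 (E × E)).fst, hRB (hmem1 p)⟩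
        rw [h, B.map_smul] } with hBfun
  have hBfun_apply : ∀ p : V, Bfun p = B ⟨(p : WithLp 2 (E × E)).fst, hRB (hmem1 p)⟩ :=
    fun p => rfl
  have hBcont : Continuous Bfun := by
    apply LinearMap.continuous_of_seq_closed_graph
    intro u x y hu hBu
    have hx : ∀ v : R.domain, ⟪y, (v : E)⟫ = ⟪Bfun x, (v : E)⟫ := by
      intro v
      have h1 : ∀ n, ⟪Bfun (u n), (v : E)⟫ = ⟪(fstL (u n) : E), B ⟨(v : E), hRB v.2⟩⟫ :=
        fun n => hBsymm ⟨fstL (u n), hRB (hmem1 (u n))⟩ ⟨(v : E), hRB v.2⟩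
      have t1 : Filter.Tendsto (fun n => ⟪Bfun (u n), (v : E)⟫) Filter.atTop
          (nhds ⟪y, (v : E)⟫) :=
        Filter.Tendsto.inner hBu tendsto_const_nhds
      have t2 : Filter.Tendsto (fun n => ⟪(fstL (u n) : E), B ⟨(v : E), hRB v.2⟩⟫)
          Filter.atTop (nhds ⟪fstL x, B ⟨(v : E), hRB v.2⟩⟫) :=
        Filter.Tendsto.inner ((fstL.continuous.tendsto x).comp hu) tendsto_const_nhds
      have h2 : ⟪y, (v : E)⟫ = ⟪fstL x, B ⟨(v : E), hRB v.2⟩⟫ :=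
        tendsto_nhds_unique (by simpa only [h1] using t1) t2
      rw [h2]
      exact (hBsymm ⟨fstL x, hRB (hmem1 x)⟩ ⟨(v : E), hRB v.2⟩).symm
    exact hd.eq_of_inner_left ℂ fun v hv => hx ⟨v, hv⟩
  set Bc : V →L[ℂ] E := ⟨Bfun, hBcont⟩ with hBc
  have hBc_apply : ∀ p : V, Bc p = B ⟨(p : WithLp 2 (E × E)).fst, hRB (hmem1 p)⟩ :=
    fun p => rfl
  -- the operator S u = u - i B u (weakly) on V
  set Sfun : V → V := fun u => (InnerProductSpace.toDual ℂ V).symm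
      ((InnerProductSpace.toDual ℂ V u : V →L[ℂ] ℂ)
        - Complex.I • ((innerSL ℂ (Bc u)).comp fstL)) with hSfun
  have hSkey : ∀ u v : V, (⟪Sfun u, v⟫ : ℂ)
      = ⟪u, v⟫ - Complex.I * ⟪Bc u, fstL v⟫ := by
    intro u v
    rw [hSfun]
    rw [InnerProductSpace.toDual_symm_apply]
    simp only [ContinuousLinearMap.sub_apply, ContinuousLinearMap.smul_apply,
      ContinuousLinearMap.comp_apply, innerSL_apply_apply, InnerProductSpace.toDual_apply_apply,
      smul_eq_mul]
  -- ⟪Bc u, fstL u⟫ is real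
  have hreal : ∀ u : V, (⟪Bc u, fstL u⟫ : ℂ).im = 0 := by
    intro u
    have h1 : (⟪Bc u, fstL u⟫ : ℂ) = ⟪(fstL u : E), Bc u⟫ :=
      hBsymm ⟨fstL u, hRB (hmem1 u)⟩ ⟨fstL u, hRB (hmem1 u)⟩
    have h2 : (starRingEnd ℂ) ⟪Bc u, fstL u⟫ = ⟪Bc u, fstL u⟫ := by
      rw [inner_conj_symm]
      exact h1.symm
    exact (Complex.conj_eq_iff_im.mp h2)
  -- the real part of ⟪S u, u⟫ is ‖u‖²
  have hSre : ∀ u : V, (⟪Sfun u, u⟫ : ℂ).re = ‖u‖ ^ 2 := by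
    intro u
    rw [hSkey u u]
    have h1 : ((⟪u, u⟫ : ℂ)).re = ‖u‖ ^ 2 := by
      rw [← RCLike.re_to_complex]
      exact inner_self_eq_norm_sq u
    have h2 : (Complex.I * ⟪Bc u, fstL u⟫).re = 0 := by
      rw [Complex.mul_re]
      simp [hreal u]
    rw [Complex.sub_re, h1, h2, sub_zero]
  -- lower bound
  have hlow : ∀ u : V, ‖u‖ ≤ ‖Sfun u‖ := by
    intro u
    have h1 : ‖u‖ ^ 2 = (⟪Sfun u, u⟫ : ℂ).re := (hSre u).symm
    have h2 : (⟪Sfun u, u⟫ : ℂ).re ≤ ‖(⟪Sfun u, u⟫ : ℂ)‖ := Complex.re_le_norm _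
    have h3 : ‖(⟪Sfun u, u⟫ : ℂ)‖ ≤ ‖Sfun u‖ * ‖u‖ := norm_inner_le_norm (𝕜 := ℂ) (Sfun u) u
    nlinarith [norm_nonneg u, norm_nonneg (Sfun u)]
  -- S is linear
  have hSadd : ∀ u w : V, Sfun (u + w) = Sfun u + Sfun w := by
    intro u w
    apply ext_inner_right ℂ
    intro v
    simp only [inner_add_left, hSkey, map_add]
    ring
  have hSsmul : ∀ (c : ℂ) (u : V), Sfun (c • u) = c • Sfun u := by
    intro c u
    apply ext_inner_right ℂ
    intro v
    simp only [inner_smul_left, hSkey, map_smul]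
    have e1 : (⟪c • u, v⟫ : ℂ) = starRingEnd ℂ c * ⟪u, v⟫ := inner_smul_left (𝕜 := ℂ) u v c
    have e2 : (⟪c • Sfun u, v⟫ : ℂ) = starRingEnd ℂ c * ⟪Sfun u, v⟫ := inner_smul_left (𝕜 := ℂ) (Sfun u) v c
    rw [e1, e2, hSkey]
    ring
  have hSbound : ∀ u : V, ‖Sfun u‖ ≤ (1 + ‖Bc‖) * ‖u‖ := by
    intro u
    rw [hSfun]
    simp only []
    rw [LinearIsometryEquiv.norm_map]
    refine le_trans (norm_sub_le (E := V →L[ℂ] ℂ) _ _) ?_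
    have h1 : ‖(InnerProductSpace.toDual ℂ V u : V →L[ℂ] ℂ)‖ = ‖u‖ :=
      (InnerProductSpace.toDual ℂ V).norm_map u
    have hfstn : ‖fstL‖ ≤ 1 :=
      ContinuousLinearMap.opNorm_le_bound fstL zero_le_one fun p => by
        rw [one_mul]; exact hfst_le p
    have h2 : ‖Complex.I • ((innerSL ℂ (Bc u)).comp fstL)‖ ≤ ‖Bc‖ * ‖u‖ := by
      refine ContinuousLinearMap.opNorm_le_bound _ (by positivity) fun v => ?_
      rw [ContinuousLinearMap.smul_apply, norm_smul, Complex.norm_I, one_mul,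
        ContinuousLinearMap.comp_apply, innerSL_apply_apply]
      calc ‖(⟪Bc u, fstL v⟫ : ℂ)‖ ≤ ‖Bc u‖ * ‖fstL v‖ := norm_inner_le_norm (𝕜 := ℂ) _ _
        _ ≤ (‖Bc‖ * ‖u‖) * ‖v‖ := by
            have hb := Bc.le_opNorm u
            have hf := hfst_le v
            have h0 : (0:ℝ) ≤ ‖Bc u‖ := norm_nonneg _
            nlinarith [norm_nonneg (fstL v), norm_nonneg v, norm_nonneg u,
              norm_nonneg Bc, norm_nonneg (Bc u)]
    rw [h1]
    nlinarith [norm_nonneg u]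
  set SL : V →ₗ[ℂ] V :=
    { toFun := Sfun
      map_add' := hSadd
      map_smul' := hSsmul } with hSL
  set Sc : V →L[ℂ] V := SL.mkContinuous (1 + ‖Bc‖) hSbound with hSc
  have hSc_apply : ∀ u : V, Sc u = Sfun u := fun u => rfl
  have hanti : AntilipschitzWith 1 Sc := by
    apply Sc.antilipschitz_of_bound
    intro x
    rw [NNReal.coe_one, one_mul]
    exact hlow x
  set K : Submodule ℂ V := LinearMap.range SL with hK
  have hKrange : (K : Set V) = Set.range Sc := by
    rw [hK, LinearMap.coe_range]
    rfl
  have hKclosed : IsClosed (K : Set V) := by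
    rw [hKrange]
    exact hanti.isClosed_range Sc.uniformContinuous
  haveI : CompleteSpace K := hKclosed.completeSpace_coe
  have hbot : Kᗮ = ⊥ := by
    rw [Submodule.eq_bot_iff]
    intro w hw
    have hwK : Sfun w ∈ K := LinearMap.mem_range.mpr ⟨w, rfl⟩
    have h0 : (⟪Sfun w, w⟫ : ℂ) = 0 := (Submodule.mem_orthogonal K w).mp hw (Sfun w) hwK
    have h1 := hSre w
    rw [h0] at h1
    have h2 : ‖w‖ ^ 2 = 0 := by simpa using h1.symm
    have h3 : ‖w‖ = 0 := by nlinarith [norm_nonneg w]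
    exact norm_eq_zero.mp h3
  have htop : K = ⊤ := Submodule.orthogonal_eq_bot_iff.mp hbot
  have hsurj : ∀ g : V, ∃ u : V, Sfun u = g := by
    intro g
    have hg : g ∈ K := htop ▸ Submodule.mem_top
    exact LinearMap.mem_range.mp hg
  constructor
  · -- surjectivity of A + iB + 1
    intro y
    obtain ⟨u, hu⟩ := hsurj ((InnerProductSpace.toDual ℂ V).symm ((innerSL ℂ y).comp fstL))
    have hweak : ∀ v : V, (⟪u, v⟫ : ℂ) - Complex.I * ⟪Bc u, fstL v⟫ = ⟪y, fstL v⟫ := by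
      intro v
      rw [← hSkey, hu, InnerProductSpace.toDual_symm_apply]
      rfl
    set u1 : E := (u : WithLp 2 (E × E)).fst with hu1def
    have hu1 : u1 ∈ R.domain := hmem1 u
    set z : E := y - u1 - Complex.I • B ⟨u1, hRB hu1⟩ with hz
    have hRz : ∀ v : R.domain, ⟪(R ⟨u1, hu1⟩ : E), R v⟫ = ⟪z, (v : E)⟫ := by
      intro v
      set w : V := ⟨(WithLp.equiv 2 (E × E)).symm ((v : E), R v), hlift v⟩ with hw
      have hw1 : (w : WithLp 2 (E × E)).fst = (v : E) := rfl
      have hw2 : (w : WithLp 2 (E × E)).snd = R v := rfl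
      have hv := hweak w
      rw [hinner u w] at hv
      rw [hfstL_apply w, hw1, hw2] at hv
      have hBu : Bc u = B ⟨u1, hRB hu1⟩ := hBc_apply u
      rw [hBu] at hv
      -- hv : ⟪u1, v⟫ + ⟪u2, R v⟫ - I * ⟪B u1, v⟫ = ⟪y, v⟫, with u2 = R ⟨u1,hu1⟩
      rw [hz]
      rw [inner_sub_left, inner_sub_left, inner_smul_left, Complex.conj_I]
      have hsnd' : (R ⟨u1, hu1⟩ : E) = (u : WithLp 2 (E × E)).snd := hsnd u
      rw [hsnd']
      linear_combination hv
    have hmem2 : (R ⟨u1, hu1⟩ : E) ∈ (LinearPMap.adjoint R).domain :=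
      LinearPMap.mem_adjoint_domain_of_exists _ ⟨z, fun x => (hRz x).symm⟩
    have hval : (LinearPMap.adjoint R) ⟨(R ⟨u1, hu1⟩ : E), hmem2⟩ = z :=
      LinearPMap.adjoint_apply_eq hd _ fun x => (hRz x).symm
    have hg := LinearPMap.mem_graph (LinearPMap.adjoint R) ⟨(R ⟨u1, hu1⟩ : E), hmem2⟩
    have hgr : (LinearPMap.adjoint R).graph = R.graph := by rw [hR']
    rw [hval, hgr] at hg
    obtain ⟨x, hx1, hx2⟩ := (LinearPMap.mem_graph_iff R).mp hg
    have hx1' : (x : E) = (R ⟨u1, hu1⟩ : E) := hx1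
    have hx2' : R x = z := hx2
    have hu2 : (R ⟨u1, hu1⟩ : E) ∈ R.domain := hx1' ▸ x.2
    refine ⟨u1, hu1, hu2, ?_⟩
    have hxx : (⟨(R ⟨u1, hu1⟩ : E), hu2⟩ : R.domain) = x := Subtype.ext hx1'.symm
    rw [hxx, hx2', hz]
    module
  · -- relative bound for B
    refine ⟨‖Bc‖, ContinuousLinearMap.opNorm_nonneg _, ?_⟩
    intro u hu
    set p : V := ⟨(WithLp.equiv 2 (E × E)).symm (u, R ⟨u, hu⟩), hlift ⟨u, hu⟩⟩ with hp
    have hp1 : (p : WithLp 2 (E × E)).fst = u := rfl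
    have hp2 : (p : WithLp 2 (E × E)).snd = R ⟨u, hu⟩ := rfl
    have hBp : Bc p = B ⟨u, hRB hu⟩ := hBc_apply p
    have hnp : ‖p‖ ^ 2 = ‖u‖ ^ 2 + ‖(R ⟨u, hu⟩ : E)‖ ^ 2 := hnorm p
    have hBb : ‖Bc p‖ ≤ ‖Bc‖ * ‖p‖ := Bc.le_opNorm p
    have hup : ‖u‖ ≤ ‖p‖ := by
      rw [← hp1]
      rw [← hfstL_apply p]
      exact hfst_le p
    rw [← hBp]
    calc ‖Bc p‖ * ‖u‖ ≤ (‖Bc‖ * ‖p‖) * ‖p‖ := by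
          apply mul_le_mul hBb hup (norm_nonneg u)
          positivity
      _ = ‖Bc‖ * ‖p‖ ^ 2 := by ring
      _ = ‖Bc‖ * (‖u‖ ^ 2 + ‖(R ⟨u, hu⟩ : E)‖ ^ 2) := by rw [hnp]


end AuxAiB
end

open scoped ComplexInnerProductSpace

set_option maxHeartbeats 1000000 in
/-- Let `A` be a non-negative selfadjoint operator and `B` a symmetric
operator with `dom A^{1/2} ⊆ dom B` (the square root `A^{1/2}` is encoded as a non-negative
selfadjoint operator `R` with `R² = A`).  Then `T := A + iB` with `dom T = dom A` is
m-accretive, `T* = A − iB` with `dom T* = dom A`, `(T + T*)/2 = A`, `(T − T*)/(2i) = B↾dom A`,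
and for every `a < min σ(A)` (i.e. `A − a` coercive) the operator `T − a` is sectorial
(hence m-sectorial). -/
theorem A_plus_iB_mAccretive
    {E : Type*} [NormedAddCommGroup E] [InnerProductSpace ℂ E] [CompleteSpace E]
    (A B R : E →ₗ.[ℂ] E)
    (hA : IsSelfAdjoint A)
    (hApos : ∀ u : A.domain, 0 ≤ (⟪A u, (u : E)⟫).re)
    (hBsymm : ∀ u v : B.domain, ⟪B u, (v : E)⟫ = ⟪(u : E), B v⟫)
    -- `R = A^{1/2}`: a non-negative selfadjoint operator with `R² = A`
    (hR : IsSelfAdjoint R)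
    (hRpos : ∀ u : R.domain, 0 ≤ (⟪R u, (u : E)⟫).re)
    (hRsq : ∀ u : E, u ∈ A.domain ↔ ∃ hu : u ∈ R.domain, R ⟨u, hu⟩ ∈ R.domain)
    (hRsq' : ∀ (u : E) (hu : u ∈ A.domain) (hu1 : u ∈ R.domain) (hu2 : R ⟨u, hu1⟩ ∈ R.domain),
      A ⟨u, hu⟩ = R ⟨R ⟨u, hu1⟩, hu2⟩)
    -- `dom A^{1/2} ⊆ dom B` (whence also `dom A ⊆ dom B`)
    (hRB : R.domain ≤ B.domain)
    (hAB : A.domain ≤ B.domain) :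
    -- `T = A + iB` is accretive
    (∀ u : A.domain, 0 ≤ (⟪A u + Complex.I • B ⟨(u : E), hAB u.2⟩, (u : E)⟫).re) ∧
    -- maximality: `ran (T + 1) = H`
    (∀ y : E, ∃ u : A.domain, A u + Complex.I • B ⟨(u : E), hAB u.2⟩ + (u : E) = y) ∧
    -- `T* = A − iB` with `dom T* = dom A`
    (∀ h w : E,
      (∀ u : A.domain, ⟪A u + Complex.I • B ⟨(u : E), hAB u.2⟩, h⟫ = ⟪(u : E), w⟫)
        ↔ ∃ hh : h ∈ A.domain, w = A ⟨h, hh⟩ - Complex.I • B ⟨h, hAB hh⟩) ∧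
    -- `(T + T*)/2 = A` and `(T − T*)/(2i) = B ↾ dom A`
    (∀ u : A.domain,
      (2 : ℂ)⁻¹ • ((A u + Complex.I • B ⟨(u : E), hAB u.2⟩)
          + (A u - Complex.I • B ⟨(u : E), hAB u.2⟩)) = A u ∧
      (2 * Complex.I)⁻¹ • ((A u + Complex.I • B ⟨(u : E), hAB u.2⟩)
          - (A u - Complex.I • B ⟨(u : E), hAB u.2⟩)) = B ⟨(u : E), hAB u.2⟩) ∧
    -- for every `a < min σ(A)`, i.e. `A − a` coercive, `T − a` is sectorial
    (∀ a : ℝ, (∃ δ : ℝ, 0 < δ ∧ ∀ u : A.domain,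
        (a + δ) * ‖(u : E)‖ ^ 2 ≤ (⟪A u, (u : E)⟫).re) →
      ∃ k : ℝ, ∀ u : A.domain,
        |(⟪A u + Complex.I • B ⟨(u : E), hAB u.2⟩ - (a : ℂ) • (u : E), (u : E)⟫).im|
          ≤ k * (⟪A u + Complex.I • B ⟨(u : E), hAB u.2⟩ - (a : ℂ) • (u : E), (u : E)⟫).re) := by
  have hAsymm : ∀ u v : A.domain, ⟪A u, (v : E)⟫ = ⟪(u : E), A v⟫ := AuxAiB.symm_of_sa hA
  have hBreal : ∀ x : B.domain, (⟪B x, (x : E)⟫ : ℂ).im = 0 := by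
    intro x
    have h2 : (starRingEnd ℂ) ⟪B x, (x : E)⟫ = ⟪B x, (x : E)⟫ := by
      rw [inner_conj_symm]
      exact (hBsymm x x).symm
    exact Complex.conj_eq_iff_im.mp h2
  obtain ⟨hsurjB, M, hM0, hMb⟩ := AuxAiB.core hR hBsymm hRB
  have hBsymm' : ∀ u v : (-B).domain, ⟪(-B) u, (v : E)⟫ = ⟪(u : E), (-B) v⟫ := by
    intro u v
    rw [LinearPMap.neg_apply, LinearPMap.neg_apply, inner_neg_left, inner_neg_right]
    exact congrArg Neg.neg (hBsymm u v)
  obtain ⟨hsurjB', -⟩ := AuxAiB.core hR hBsymm' (hRB : R.domain ≤ (-B).domain)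
  -- surjectivity of T + 1
  have hTsurj : ∀ y : E, ∃ u : A.domain,
      A u + Complex.I • B ⟨(u : E), hAB u.2⟩ + (u : E) = y := by
    intro y
    obtain ⟨u, hu1, hu2, heq⟩ := hsurjB y
    have huA : u ∈ A.domain := (hRsq u).mpr ⟨hu1, hu2⟩
    refine ⟨⟨u, huA⟩, ?_⟩
    have hAu : A ⟨u, huA⟩ = R ⟨R ⟨u, hu1⟩, hu2⟩ := hRsq' u huA hu1 hu2
    rw [hAu]
    exact heq
  -- surjectivity of T' + 1 where T' = A - iB
  have hTsurj' : ∀ y : E, ∃ u : A.domain,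
      A u - Complex.I • B ⟨(u : E), hAB u.2⟩ + (u : E) = y := by
    intro y
    obtain ⟨u, hu1, hu2, heq⟩ := hsurjB' y
    have huA : u ∈ A.domain := (hRsq u).mpr ⟨hu1, hu2⟩
    refine ⟨⟨u, huA⟩, ?_⟩
    have hAu : A ⟨u, huA⟩ = R ⟨R ⟨u, hu1⟩, hu2⟩ := hRsq' u huA hu1 hu2
    rw [hAu]
    have hnb : ((-B) ⟨u, (hRB : R.domain ≤ (-B).domain) hu1⟩ : E)
        = -(B ⟨u, hRB hu1⟩ : E) := LinearPMap.neg_apply _ _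
    rw [hnb, smul_neg] at heq
    rw [sub_eq_add_neg]
    exact heq
  -- the key adjoint identity
  have hpair : ∀ u v : A.domain,
      ⟪A u + Complex.I • B ⟨(u : E), hAB u.2⟩, (v : E)⟫
        = ⟪(u : E), A v - Complex.I • B ⟨(v : E), hAB v.2⟩⟫ := by
    intro u v
    rw [inner_add_left, inner_sub_right, inner_smul_left, inner_smul_right, Complex.conj_I,
      hAsymm u v, hBsymm ⟨(u : E), hAB u.2⟩ ⟨(v : E), hAB v.2⟩]
    ring
  refine ⟨?_, hTsurj, ?_, ?_, ?_⟩
  · -- accretivity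
    intro u
    rw [inner_add_left, Complex.add_re, inner_smul_left, Complex.conj_I]
    have hc := hBreal ⟨(u : E), hAB u.2⟩
    have h2 : ((-Complex.I) * ⟪B ⟨(u : E), hAB u.2⟩, (u : E)⟫).re = 0 := by
      rw [Complex.mul_re]
      simp [hc]
    rw [h2, add_zero]
    exact hApos u
  · -- adjoint
    intro h w
    constructor
    · intro hyp
      obtain ⟨h', hh'⟩ := hTsurj' (w + h)
      have hkey : ∀ u : A.domain,
          ⟪A u + Complex.I • B ⟨(u : E), hAB u.2⟩ + (u : E), h - (h' : E)⟫ = 0 := by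
        intro u
        rw [inner_sub_right]
        have e1 : ⟪A u + Complex.I • B ⟨(u : E), hAB u.2⟩ + (u : E), h⟫
            = ⟪(u : E), w + h⟫ := by
          rw [inner_add_left, hyp u, inner_add_right]
        have e2 : ⟪A u + Complex.I • B ⟨(u : E), hAB u.2⟩ + (u : E), (h' : E)⟫
            = ⟪(u : E), w + h⟫ := by
          rw [inner_add_left, hpair u h', ← inner_add_right, hh']
        rw [e1, e2, sub_self]
      have hz : h - (h' : E) = 0 := by
        obtain ⟨u, hu⟩ := hTsurj (h - (h' : E))
        have := hkey u
        rw [hu] at this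
        exact inner_self_eq_zero.mp this
      have hhv : h = (h' : E) := sub_eq_zero.mp hz
      have hh : h ∈ A.domain := hhv ▸ h'.2
      refine ⟨hh, ?_⟩
      have hsubA : (⟨h, hh⟩ : A.domain) = h' := Subtype.ext hhv
      have hsubB : (⟨h, hAB hh⟩ : B.domain) = ⟨(h' : E), hAB h'.2⟩ := Subtype.ext hhv
      rw [hsubA, hsubB]
      rw [hhv] at hh'
      exact (add_right_cancel hh').symm
    · rintro ⟨hh, rfl⟩
      intro u
      exact hpair u ⟨h, hh⟩
  · -- real and imaginary parts
    intro u
    constructor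
    · have h1 : (A u + Complex.I • B ⟨(u : E), hAB u.2⟩)
          + (A u - Complex.I • B ⟨(u : E), hAB u.2⟩) = (2 : ℂ) • A u := by
        module
      rw [h1, smul_smul]
      norm_num
    · have h1 : (A u + Complex.I • B ⟨(u : E), hAB u.2⟩)
          - (A u - Complex.I • B ⟨(u : E), hAB u.2⟩)
          = (2 * Complex.I) • B ⟨(u : E), hAB u.2⟩ := by
        module
      rw [h1, smul_smul, inv_mul_cancel₀ (by simp [Complex.I_ne_zero]), one_smul]
  · -- sectoriality
    rintro a ⟨δ, hδ, hcoer⟩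
    refine ⟨M * (1 + (|a| + 1) / δ), ?_⟩
    intro u
    obtain ⟨hu1, hu2⟩ := (hRsq u).mp u.2
    have hAu : A u = R ⟨R ⟨(u : E), hu1⟩, hu2⟩ := hRsq' (u : E) u.2 hu1 hu2
    have hAuu : ⟪A u, (u : E)⟫ = ⟪(R ⟨(u : E), hu1⟩ : E), (R ⟨(u : E), hu1⟩ : E)⟫ := by
      rw [hAu]
      exact AuxAiB.symm_of_sa hR ⟨R ⟨(u : E), hu1⟩, hu2⟩ ⟨(u : E), hu1⟩
    set X : ℝ := ‖(R ⟨(u : E), hu1⟩ : E)‖ ^ 2 with hX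
    set Y : ℝ := ‖(u : E)‖ ^ 2 with hY
    set c : ℂ := ⟪B ⟨(u : E), hAB u.2⟩, (u : E)⟫ with hc
    have hAim : (⟪A u, (u : E)⟫ : ℂ).im = 0 := by
      rw [hAuu, ← RCLike.im_to_complex]
      exact inner_self_im _
    have hAre : (⟪A u, (u : E)⟫ : ℂ).re = X := by
      rw [hAuu, ← RCLike.re_to_complex]
      exact inner_self_eq_norm_sq _
    have hcim : c.im = 0 := hBreal _
    have hexp : ⟪A u + Complex.I • B ⟨(u : E), hAB u.2⟩ - (a : ℂ) • (u : E), (u : E)⟫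
        = ⟪A u, (u : E)⟫ + (-Complex.I) * c - (a : ℂ) * ⟪(u : E), (u : E)⟫ := by
      rw [inner_sub_left, inner_add_left, inner_smul_left, inner_smul_left, Complex.conj_I,
        Complex.conj_ofReal]
    have huu : (⟪(u : E), (u : E)⟫ : ℂ) = (Y : ℂ) := by
      rw [hY, inner_self_eq_norm_sq_to_K]
      norm_num
    have him : (⟪A u + Complex.I • B ⟨(u : E), hAB u.2⟩ - (a : ℂ) • (u : E), (u : E)⟫).im
        = -c.re := by
      rw [hexp, huu]
      simp [Complex.sub_im, Complex.add_im, Complex.mul_im, hAim, hcim]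
    have hre : (⟪A u + Complex.I • B ⟨(u : E), hAB u.2⟩ - (a : ℂ) • (u : E), (u : E)⟫).re
        = X - a * Y := by
      rw [hexp, huu]
      simp [Complex.sub_re, Complex.add_re, Complex.mul_re, hAre, hcim]
    rw [him, hre, abs_neg]
    -- bound |c.re|
    have habs : |c.re| ≤ M * (Y + X) := by
      have h1 : |c.re| ≤ ‖c‖ := Complex.abs_re_le_norm c
      have h2 : ‖c‖ ≤ ‖(B ⟨(u : E), hAB u.2⟩ : E)‖ * ‖(u : E)‖ := norm_inner_le_norm (𝕜 := ℂ) _ _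
      have h3 : (B ⟨(u : E), hAB u.2⟩ : E) = (B ⟨(u : E), hRB hu1⟩ : E) := rfl
      have h4 := hMb (u : E) hu1
      rw [← h3] at h4
      calc |c.re| ≤ ‖(B ⟨(u : E), hAB u.2⟩ : E)‖ * ‖(u : E)‖ := le_trans h1 h2
        _ ≤ M * (Y + X) := h4
    have hco : (a + δ) * Y ≤ X := by
      have := hcoer u
      rw [hAre] at this
      exact this
    have hY0 : 0 ≤ Y := by positivity
    have hD : δ * Y ≤ X - a * Y := by nlinarith
    have hD0 : 0 ≤ X - a * Y := by nlinarith
    have hYD : Y ≤ (X - a * Y) / δ := by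
      rw [le_div_iff₀ hδ]
      nlinarith
    have hXD : X ≤ (X - a * Y) + |a| * Y := by
      have := mul_le_mul_of_nonneg_right (le_abs_self a) hY0
      nlinarith
    calc |c.re| ≤ M * (Y + X) := habs
      _ ≤ M * ((X - a * Y) + (|a| + 1) * ((X - a * Y) / δ)) := by
          have h5 : (|a| + 1) * Y ≤ (|a| + 1) * ((X - a * Y) / δ) := by
            apply mul_le_mul_of_nonneg_left hYD
            positivity
          apply mul_le_mul_of_nonneg_left _ hM0
          nlinarith
      _ = M * (1 + (|a| + 1) / δ) * (X - a * Y) := by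
          field_simp
end

section
/- Let B be a closed densely defined symmetric operator with bounded inverse admitting a selfadjoint extension B̃ with compact inverse, and let F be a bounded positive definite selfadjoint operator. Then (B*FB)⁻¹ (defined on ran B*FB) is compact. -/
/-! Write `K̃ = B̃⁻¹`. For `u ∈ dom (B* F B)`, coercivity of `F` and `‖u‖ = ‖K̃ (B u)‖ ≤ ‖K̃‖ ‖B u‖`
give `c ‖B u‖² ≤ Re ⟪B* F B u, u⟫ ≤ ‖B* F B u‖ ‖K̃‖ ‖B u‖`. Hence `B* F B u ↦ B u` is bounded
on the range of `B* F B` and extends to a bounded operator `S` on `E` (by continuity to the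
closure of the range, by zero on its orthogonal complement), and `(B* F B)⁻¹ = K̃ S` is compact
because `K̃` is. -/

theorem LinearMap.exists_clm_comp_eq_of_norm_le {𝕜 V E F : Type*} [RCLike 𝕜]
    [AddCommGroup V] [Module 𝕜 V] [NormedAddCommGroup E] [InnerProductSpace 𝕜 E]
    [CompleteSpace E] [NormedAddCommGroup F] [NormedSpace 𝕜 F] [CompleteSpace F]
    (A : V →ₗ[𝕜] E) (L : V →ₗ[𝕜] F) (h : ∃ C, ∀ v, ‖L v‖ ≤ C * ‖A v‖) :
    ∃ T : E →L[𝕜] F, ∀ v, T (A v) = L v := by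
  set K := (LinearMap.range A).topologicalClosure
  let e : V →ₗ[𝕜] K :=
    A.codRestrict K fun v ↦
      (LinearMap.range A).le_topologicalClosure (LinearMap.mem_range_self A v)
  have he : DenseRange e := Subtype.dense_iff.2 <| by
    rw [← Set.range_comp]
    exact (Submodule.topologicalClosure_coe _).subset
  refine ⟨(L.extendOfNorm e).comp K.orthogonalProjectionOnto, fun v ↦ ?_⟩
  have : K.orthogonalProjectionOnto (A v) = e v :=
    K.orthogonalProjectionOnto_mem_subspace_eq_self (e v)
  simpa [this] using LinearMap.extendOfNorm_eq he h v

open scoped InnerProductSpace in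
theorem LinearPMap.mul_norm_le_opNorm_mul_norm_adjoint_apply {𝕜 E : Type*} [RCLike 𝕜]
    [NormedAddCommGroup E] [InnerProductSpace 𝕜 E] [CompleteSpace E] {B : E →ₗ.[𝕜] E}
    (hB : Dense (B.domain : Set E)) {K : E →L[𝕜] E} (hK : ∀ u : B.domain, K (B u) = u)
    {F : E →L[𝕜] E} {c : ℝ} (hF : ∀ x, c * ‖x‖ ^ 2 ≤ RCLike.re ⟪F x, x⟫_𝕜)
    (u : B.domain) (hu : F (B u) ∈ B.adjoint.domain) :
    c * ‖B u‖ ≤ ‖K‖ * ‖B.adjoint ⟨F (B u), hu⟩‖ := by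
  set y := B.adjoint ⟨F (B u), hu⟩
  have hcoercive : c * ‖B u‖ ^ 2 ≤ ‖y‖ * ‖(u : E)‖ := calc
    c * ‖B u‖ ^ 2 ≤ RCLike.re ⟪F (B u), B u⟫_𝕜 := hF _
    _ = RCLike.re ⟪y, u⟫_𝕜 := by rw [B.adjoint_isFormalAdjoint hB]
    _ ≤ ‖y‖ * ‖(u : E)‖ := re_inner_le_norm _ _
  have hu_le : ‖(u : E)‖ ≤ ‖K‖ * ‖B u‖ := hK u ▸ K.le_opNorm _
  rcases (norm_nonneg (B u)).eq_or_lt with h0 | hpos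
  · rw [← h0, mul_zero]
    positivity
  · refine le_of_mul_le_mul_right ?_ hpos
    nlinarith [norm_nonneg y]

open scoped ComplexInnerProductSpace

theorem inverse_BstarFB_compact_general
    {E : Type*} [NormedAddCommGroup E] [InnerProductSpace ℂ E] [CompleteSpace E]
    (B : E →ₗ.[ℂ] E)
    (hdense : Dense (B.domain : Set E))
    -- `B̃` is a selfadjoint extension of `B` with compact (everywhere defined) inverse
    (Bt : E →ₗ.[ℂ] E) (hext : B ≤ Bt)
    (hBtinv : ∃ Kt : E →L[ℂ] E, IsCompactOperator (Kt : E → E) ∧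
      (∀ u : Bt.domain, Kt (Bt u) = (u : E)) ∧
      (∀ y : E, ∃ hy : Kt y ∈ Bt.domain, Bt ⟨Kt y, hy⟩ = y))
    (F : E →L[ℂ] E)
    (hFpos : ∃ c : ℝ, 0 < c ∧ ∀ x : E, c * ‖x‖ ^ 2 ≤ (⟪F x, x⟫).re) :
    ∃ K : E →L[ℂ] E, IsCompactOperator (K : E → E) ∧
      ∀ (x : E) (hx : x ∈ B.domain) (hFx : F (B ⟨x, hx⟩) ∈ B.adjoint.domain),
        K (B.adjoint ⟨F (B ⟨x, hx⟩), hFx⟩) = x := by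
  obtain ⟨Kt, hKt_compact, hKt_left, -⟩ := hBtinv
  obtain ⟨c, hc, hFc⟩ := hFpos
  have hKt : ∀ u : B.domain, Kt (B u) = u := fun u ↦ by
    rw [hext.2 (x := u) (y := ⟨u, hext.1 u.2⟩) rfl]
    exact hKt_left ⟨u, hext.1 u.2⟩
  let D : Submodule ℂ B.domain := B.adjoint.domain.comap (F.toLinearMap ∘ₗ B.toFun)
  let C : D →ₗ[ℂ] E :=
    B.adjoint.toFun ∘ₗ
      (F.toLinearMap ∘ₗ B.toFun ∘ₗ D.subtype).codRestrict B.adjoint.domain fun u ↦ u.2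
  obtain ⟨T, hT⟩ := C.exists_clm_comp_eq_of_norm_le (B.toFun ∘ₗ D.subtype) ⟨‖Kt‖ / c, fun u ↦ by
    rw [div_mul_eq_mul_div, le_div_iff₀' hc]
    exact B.mul_norm_le_opNorm_mul_norm_adjoint_apply hdense hKt hFc u u.2⟩
  refine ⟨Kt ∘L T, hKt_compact.comp_clm T, fun x hx hFx ↦ ?_⟩
  exact (congrArg Kt (hT ⟨⟨x, hx⟩, hFx⟩)).trans (hKt ⟨x, hx⟩)

/-- Let `B` be a closed densely defined symmetric operator with bounded
inverse, admitting a selfadjoint extension `B̃` with compact inverse, and let `F` be a bounded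
positive definite selfadjoint operator.  Then `(B*FB)⁻¹` (defined on `ran B*FB`) is compact:
there is a compact operator `K` with `K ((B*FB) x) = x` for all `x ∈ dom B*FB`. -/
theorem inverse_BstarFB_compact
    {E : Type*} [NormedAddCommGroup E] [InnerProductSpace ℂ E] [CompleteSpace E]
    (B : E →ₗ.[ℂ] E)
    (hdense : Dense (B.domain : Set E))
    (hclosed : B.IsClosed)
    (hBsymm : ∀ u v : B.domain, ⟪B u, (v : E)⟫ = ⟪(u : E), B v⟫)
    -- `B` has bounded inverse
    (hBinv : ∃ c : ℝ, 0 < c ∧ ∀ u : B.domain, c * ‖(u : E)‖ ≤ ‖B u‖)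
    -- `B̃` is a selfadjoint extension of `B` with compact (everywhere defined) inverse
    (Bt : E →ₗ.[ℂ] E) (hext : B ≤ Bt) (hBt : IsSelfAdjoint Bt)
    (hBtinv : ∃ Kt : E →L[ℂ] E, IsCompactOperator (Kt : E → E) ∧
      (∀ u : Bt.domain, Kt (Bt u) = (u : E)) ∧
      (∀ y : E, ∃ hy : Kt y ∈ Bt.domain, Bt ⟨Kt y, hy⟩ = y))
    (F : E →L[ℂ] E) (hF : IsSelfAdjoint F)
    (hFpos : ∃ c : ℝ, 0 < c ∧ ∀ x : E, c * ‖x‖ ^ 2 ≤ (⟪F x, x⟫).re) :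
    ∃ K : E →L[ℂ] E, IsCompactOperator (K : E → E) ∧
      ∀ (x : E) (hx : x ∈ B.domain) (hFx : F (B ⟨x, hx⟩) ∈ B.adjoint.domain),
        K (B.adjoint ⟨F (B ⟨x, hx⟩), hFx⟩) = x :=
  inverse_BstarFB_compact_general B hdense Bt hext hBtinv F hFpos
end

section
/- Let T be a closed densely defined operator on a Hilbert space H whose numerical range is not contained in any strip {z : |Im(νz + μ)| ≤ c} (equivalently, T is not of the form η(A + iC) with A symmetric, C bounded selfadjoint, η ∈ ℂ). Then for all bounded X, Y, the block operator T̂ = [[T, X],[Y, −T]] on dom T ⊕ dom T satisfies dom T̂ ∩ dom T̂* = (dom T ∩ dom T*) ⊕ (dom T ∩ dom T*) and W(T̂) = ℂ. -/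
/-!
By the Toeplitz–Hausdorff theorem the numerical range `W(T̂)` is convex. It contains `W(T)`
(test vectors `(u, 0)`) and `-W(T)` (test vectors `(0, u)`), so if `W(T̂)` lay in a half-plane
`Im (ν z) ≤ c`, then `W(T)` would lie in the strip `|Im (ν z)| ≤ c`. A convex subset of `ℂ`
contained in no half-plane is dense, hence all of `ℂ`.

For the domains, `X` and `Y` are bounded, so testing the adjoint relation of `T̂` against
`(u, 0)` and `(0, u)` reduces it to the adjoint relation of `T` in each component.
-/

open scoped ComplexInnerProductSpace ComplexConjugate
open Set Metric

theorem Convex.eq_univ_of_dense {V : Type*} [NormedAddCommGroup V] [NormedSpace ℝ V]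
    [FiniteDimensional ℝ V] {S : Set V} (hS : Convex ℝ S) (hd : Dense S) : S = univ := by
  have hspan : affineSpan ℝ S = ⊤ := by
    rw [← AffineSubspace.coe_eq_univ_iff, ← univ_subset_iff, ← hd.closure_eq]
    exact closure_minimal (subset_affineSpan ℝ S) (affineSpan ℝ S).closed_of_finiteDimensional
  have hint := hS.interior_closure_eq_interior_of_nonempty_interior
    (hS.interior_nonempty_iff_affineSpan_eq_top.mpr hspan)
  rw [hd.closure_eq, interior_univ] at hint
  exact univ_subset_iff.mp (hint ▸ interior_subset)

theorem ContinuousLinearMap.exists_forall_apply_eq_im_mul (f : ℂ →L[ℝ] ℝ) :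
    ∃ ν : ℂ, ∀ z, f z = (ν * z).im := by
  refine ⟨⟨f Complex.I, f 1⟩, fun z => ?_⟩
  have hz : z = z.re • (1 : ℂ) + z.im • Complex.I := by simp [Complex.real_smul]
  rw [hz, map_add, map_smul, map_smul]
  simp only [smul_eq_mul, Complex.real_smul, mul_one, Complex.re_add_im, Complex.mul_im]
  ring

theorem Convex.eq_univ_of_forall_not_bddAbove_im_mul {S : Set ℂ} (hS : Convex ℝ S)
    (h : ∀ ν : ℂ, ν ≠ 0 → ¬ BddAbove ((fun z => (ν * z).im) '' S)) : S = univ := by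
  refine hS.eq_univ_of_dense (dense_iff_closure_eq.mpr (eq_univ_of_forall fun x => ?_))
  by_contra hx
  obtain ⟨f, u, hfx, hfS⟩ := geometric_hahn_banach_point_closed hS.closure isClosed_closure hx
  obtain ⟨ν, hν⟩ := f.exists_forall_apply_eq_im_mul
  obtain ⟨z, hz⟩ : S.Nonempty := (nonempty_of_not_bddAbove (h 1 one_ne_zero)).of_image
  have hν0 : ν ≠ 0 := by
    rintro rfl
    have := hfS z (subset_closure hz)
    simp only [hν, zero_mul, Complex.zero_im] at hfx this
    linarith
  refine h (-ν) (neg_ne_zero.mpr hν0) ⟨-u, ?_⟩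
  rintro _ ⟨w, hw, rfl⟩
  have := hfS w (subset_closure hw)
  rw [hν] at this
  simp only [neg_mul, Complex.neg_im]
  linarith

theorem Complex.exists_norm_eq_one_im_conj_mul_add_mul_eq_zero (p q : ℂ) :
    ∃ c : ℂ, ‖c‖ = 1 ∧ (conj c * p + c * q).im = 0 := by
  set z := p - conj q
  set c := Complex.exp (z.arg * Complex.I)
  have hc : ‖c‖ = 1 := Complex.norm_exp_ofReal_mul_I _
  refine ⟨c, hc, ?_⟩
  have hz : conj c * z = ‖z‖ := by
    conv_lhs => rw [← Complex.norm_mul_exp_arg_mul_I z]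
    rw [mul_left_comm, Complex.conj_mul', hc]
    simp
  have him : (conj c * p + c * q).im = (conj c * z).im := by
    simp only [z, Complex.add_im, Complex.mul_im, Complex.sub_re, Complex.sub_im,
      Complex.conj_re, Complex.conj_im]
    ring
  rw [him, hz, Complex.ofReal_im]

namespace LinearMap

theorem apply_smul_add_smul_self {V : Type*} [AddCommGroup V] [Module ℂ V]
    (B : V →ₗ⋆[ℂ] V →ₗ[ℂ] ℂ) (a b : ℂ) (x y : V) :
    B (a • x + b • y) (a • x + b • y) = conj a * a * B x x + conj a * b * B x y
      + conj b * a * B y x + conj b * b * B y y := by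
  simp only [map_add, map_smulₛₗ, add_apply, smul_apply, smul_eq_mul, RingHom.id_apply]
  ring

theorem eq_zero_of_smul_add_smul_eq_zero {V : Type*} [AddCommGroup V] [Module ℂ V]
    (B : V →ₗ⋆[ℂ] V →ₗ[ℂ] ℂ) {x y : V} (hBx : B x x = 0) (hBy : B y y = 1) {a b : ℂ}
    (h : a • x + b • y = 0) : b = 0 := by
  simpa [hBx, hBy] using congrArg (fun v => B v v) (eq_neg_of_add_eq_zero_right h)

variable {V : Type*} [NormedAddCommGroup V] [InnerProductSpace ℂ V]

def numericalRange (B : V →ₗ⋆[ℂ] V →ₗ[ℂ] ℂ) : Set ℂ := (fun v => B v v) '' sphere 0 1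

/- The phase `c` makes `B` real along the path `s ↦ s c x + (1 - s) y`; the intermediate value
theorem then finds the value `t` on that path after normalisation. -/
theorem ofReal_mem_numericalRange_of_apply_eq_zero_of_apply_eq_one (B : V →ₗ⋆[ℂ] V →ₗ[ℂ] ℂ)
    {x y : V} (hx : ‖x‖ = 1) (hy : ‖y‖ = 1) (hBx : B x x = 0) (hBy : B y y = 1)
    {t : ℝ} (ht : t ∈ Icc (0 : ℝ) 1) : (t : ℂ) ∈ B.numericalRange := by
  obtain ⟨c, hc, hcB⟩ := Complex.exists_norm_eq_one_im_conj_mul_add_mul_eq_zero (B x y) (B y x)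
  set r := conj c * B x y + c * B y x
  set w : ℝ → V := fun s => ((s : ℂ) * c) • x + ((1 - s : ℝ) : ℂ) • y
  have hr : ((r.re : ℝ) : ℂ) = r := Complex.ext rfl (by simp [hcB])
  have hBw : ∀ s : ℝ, B (w s) (w s) = ((s * (1 - s) * r.re + (1 - s) ^ 2 : ℝ) : ℂ) := by
    intro s
    rw [apply_smul_add_smul_self, hBx, hBy, map_mul, Complex.conj_ofReal, Complex.conj_ofReal]
    push_cast
    rw [hr]
    ring
  have hcont : Continuous fun s => s * (1 - s) * r.re + (1 - s) ^ 2 - t * ‖w s‖ ^ 2 := by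
    fun_prop
  obtain ⟨s, -, hs⟩ :
      ∃ s ∈ Icc (0 : ℝ) 1, s * (1 - s) * r.re + (1 - s) ^ 2 - t * ‖w s‖ ^ 2 = 0 := by
    refine intermediate_value_Icc' zero_le_one hcont.continuousOn ⟨?_, ?_⟩
    · simpa [w, norm_smul, hc, hx] using ht.1
    · simpa [w, hy] using ht.2
  have hw : w s ≠ 0 := by
    intro h0
    have hs1 : s = 1 := by
      have := B.eq_zero_of_smul_add_smul_eq_zero hBx hBy h0
      norm_cast at this
      linarith
    have hw1 : ‖w s‖ = 1 := by simp [w, hs1, norm_smul, hc, hx]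
    simp [h0] at hw1
  have hnorm : (‖w s‖ : ℂ) ≠ 0 := by simpa using hw
  refine ⟨(‖w s‖⁻¹ : ℂ) • w s, ?_, ?_⟩
  · simp [norm_smul, hw]
  · simp only [map_smulₛₗ, smul_apply, smul_eq_mul, RingHom.id_apply]
    rw [hBw, map_inv₀, Complex.conj_ofReal,
      show s * (1 - s) * r.re + (1 - s) ^ 2 = t * ‖w s‖ ^ 2 by linarith]
    push_cast
    field_simp

theorem convex_numericalRange (B : V →ₗ⋆[ℂ] V →ₗ[ℂ] ℂ) : Convex ℝ B.numericalRange := by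
  rintro _ ⟨x, hx, rfl⟩ _ ⟨y, hy, rfl⟩ a b ha hb hab
  rw [mem_sphere_zero_iff_norm] at hx hy
  dsimp only
  by_cases hxy : B x x = B y y
  · rw [← hxy, ← add_smul, hab, one_smul]
    exact ⟨x, mem_sphere_zero_iff_norm.mpr hx, rfl⟩
  set d := B y y - B x x
  have hd : d ≠ 0 := sub_ne_zero.mpr (Ne.symm hxy)
  set B' := d⁻¹ • (B - B x x • innerₛₗ ℂ)
  have hB' : ∀ v, B' v v = d⁻¹ * (B v v - B x x * ‖v‖ ^ 2) := fun v => by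
    simp [B', inner_self_eq_norm_sq_to_K]
  obtain ⟨v, hv, hBv⟩ := B'.ofReal_mem_numericalRange_of_apply_eq_zero_of_apply_eq_one hx hy
    (by simp [hB', hx]) (by simp [hB', hy, d, inv_mul_cancel₀ hd]) ⟨hb, by linarith⟩
  refine ⟨v, hv, ?_⟩
  rw [mem_sphere_zero_iff_norm] at hv
  beta_reduce at hBv
  have hb' := hB' v
  rw [hBv, hv, Complex.ofReal_one, one_pow, mul_one] at hb'
  have hab' : (a : ℂ) + b = 1 := by exact_mod_cast hab
  rw [Complex.real_smul, Complex.real_smul]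
  field_simp at hb'
  linear_combination -hb' - B x x * hab'

end LinearMap

namespace LinearPMap

variable {E : Type*} [NormedAddCommGroup E] [InnerProductSpace ℂ E]

theorem mem_adjoint_domain_iff_exists [CompleteSpace E] {T : E →ₗ.[ℂ] E}
    (hT : Dense (T.domain : Set E)) {y : E} :
    y ∈ T†.domain ↔ ∃ w : E, ∀ x : T.domain, ⟪T x, y⟫ = ⟪(x : E), w⟫ := by
  refine ⟨fun hy => ⟨T† ⟨y, hy⟩, fun x => ?_⟩, fun ⟨w, hw⟩ => ?_⟩
  · rw [← inner_conj_symm, ← adjoint_isFormalAdjoint hT ⟨y, hy⟩ x, inner_conj_symm]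
  · exact mem_adjoint_domain_of_exists y ⟨w, fun x => by rw [← inner_conj_symm, ← hw x,
      inner_conj_symm]⟩

noncomputable def blockForm (T : E →ₗ.[ℂ] E) (X Y : E →L[ℂ] E) :
    WithLp 2 (T.domain × T.domain) →ₗ⋆[ℂ] WithLp 2 (T.domain × T.domain) →ₗ[ℂ] ℂ :=
  let π₁ := WithLp.fstₗ 2 ℂ T.domain T.domain
  let π₂ := WithLp.sndₗ 2 ℂ T.domain T.domain
  ((innerₛₗ ℂ) ∘ₛₗ (T.toFun ∘ₗ π₁ + X.toLinearMap ∘ₗ T.domain.subtype ∘ₗ π₂)).compl₂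
      (T.domain.subtype ∘ₗ π₁) +
    ((innerₛₗ ℂ) ∘ₛₗ (Y.toLinearMap ∘ₗ T.domain.subtype ∘ₗ π₁ - T.toFun ∘ₗ π₂)).compl₂
      (T.domain.subtype ∘ₗ π₂)

@[simp]
theorem blockForm_apply (T : E →ₗ.[ℂ] E) (X Y : E →L[ℂ] E)
    (v w : WithLp 2 (T.domain × T.domain)) :
    T.blockForm X Y v w = ⟪T v.fst + X v.snd, (w.fst : E)⟫ + ⟪Y v.fst - T v.snd, (w.snd : E)⟫ :=
  rfl

theorem exists_inner_block_eq_iff [CompleteSpace E] {T : E →ₗ.[ℂ] E}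
    (hT : Dense (T.domain : Set E)) (X Y : E →L[ℂ] E) (p : E × E) :
    (∃ w₁ w₂ : E, ∀ u₁ u₂ : T.domain,
      ⟪T u₁ + X u₂, p.1⟫ + ⟪Y u₁ - T u₂, p.2⟫ = ⟪(u₁ : E), w₁⟫ + ⟪(u₂ : E), w₂⟫) ↔
      p.1 ∈ T†.domain ∧ p.2 ∈ T†.domain := by
  simp only [mem_adjoint_domain_iff_exists hT]
  constructor
  · rintro ⟨w₁, w₂, h⟩
    refine ⟨⟨w₁ - Y.adjoint p.2, fun u => ?_⟩, ⟨X.adjoint p.1 - w₂, fun u => ?_⟩⟩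
    · have hu := h u 0
      simp only [ZeroMemClass.coe_zero, _root_.map_zero, add_zero, map_zero, sub_zero,
        inner_zero_left] at hu
      rw [inner_sub_right, ContinuousLinearMap.adjoint_inner_right]
      linear_combination hu
    · have hu := h 0 u
      simp only [map_zero, zero_add, ZeroMemClass.coe_zero, _root_.map_zero, zero_sub,
        inner_neg_left, inner_zero_left] at hu
      rw [inner_sub_right, ContinuousLinearMap.adjoint_inner_right]
      linear_combination -hu
  · rintro ⟨⟨w₁, h₁⟩, ⟨w₂, h₂⟩⟩
    refine ⟨w₁ + Y.adjoint p.2, X.adjoint p.1 - w₂, fun u₁ u₂ => ?_⟩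
    rw [inner_add_left, inner_sub_left, h₁, h₂, inner_add_right, inner_sub_right,
      ContinuousLinearMap.adjoint_inner_right, ContinuousLinearMap.adjoint_inner_right]
    ring

theorem inner_apply_mem_numericalRange_blockForm {T : E →ₗ.[ℂ] E} (X Y : E →L[ℂ] E)
    {u : T.domain} (hu : ‖(u : E)‖ = 1) :
    ⟪T u, (u : E)⟫ ∈ (T.blockForm X Y).numericalRange ∧
      -⟪T u, (u : E)⟫ ∈ (T.blockForm X Y).numericalRange := by
  refine ⟨⟨WithLp.toLp 2 (u, 0), ?_, ?_⟩, ⟨WithLp.toLp 2 (0, u), ?_, ?_⟩⟩ <;> simp [hu]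

theorem numericalRange_blockForm_eq_univ {T : E →ₗ.[ℂ] E} (X Y : E →L[ℂ] E)
    (hT : ∀ ν : ℂ, ν ≠ 0 → ∀ c : ℝ,
      ∃ u : T.domain, ‖(u : E)‖ = 1 ∧ c < |(ν * ⟪T u, (u : E)⟫).im|) :
    (T.blockForm X Y).numericalRange = univ := by
  refine (LinearMap.convex_numericalRange _).eq_univ_of_forall_not_bddAbove_im_mul
    fun ν hν ⟨c, hc⟩ => ?_
  obtain ⟨u, hu, hlt⟩ := hT ν hν c
  obtain ⟨hpos, hneg⟩ := inner_apply_mem_numericalRange_blockForm X Y hu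
  have hposc := hc ⟨_, hpos, rfl⟩
  have hnegc := hc ⟨_, hneg, rfl⟩
  simp only [mul_neg, Complex.neg_im] at hnegc
  exact hlt.not_ge (abs_le.mpr ⟨by linarith, hposc⟩)

end LinearPMap

theorem block_full_numerical_range_general
    {E : Type*} [NormedAddCommGroup E] [InnerProductSpace ℂ E] [CompleteSpace E]
    (T : E →ₗ.[ℂ] E)
    (hdense : Dense (T.domain : Set E))
    (hstrip : ¬ ∃ (ν μ : ℂ) (c : ℝ), ν ≠ 0 ∧
      ∀ u : T.domain, ‖(u : E)‖ = 1 → |(ν * ⟪T u, (u : E)⟫ + μ).im| ≤ c)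
    (X Y : E →L[ℂ] E) :
    -- `dom T̂ ∩ dom T̂* = (dom T ∩ dom T*) ⊕ (dom T ∩ dom T*)`
    ({p : E × E | p.1 ∈ T.domain ∧ p.2 ∈ T.domain} ∩
        {p : E × E | ∃ w1 w2 : E, ∀ u1 u2 : T.domain,
          ⟪T u1 + X (u2 : E), p.1⟫ + ⟪Y (u1 : E) - T u2, p.2⟫
            = ⟪(u1 : E), w1⟫ + ⟪(u2 : E), w2⟫}
      = {p : E × E | (p.1 ∈ T.domain ∧ p.1 ∈ T.adjoint.domain) ∧
          (p.2 ∈ T.domain ∧ p.2 ∈ T.adjoint.domain)}) ∧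
    -- `W(T̂) = ℂ`
    (∀ z : ℂ, ∃ u1 u2 : T.domain, ‖(u1 : E)‖ ^ 2 + ‖(u2 : E)‖ ^ 2 = 1 ∧
      ⟪T u1 + X (u2 : E), (u1 : E)⟫ + ⟪Y (u1 : E) - T u2, (u2 : E)⟫ = z) := by
  refine ⟨Set.ext fun p => ?_, fun z => ?_⟩
  · simp only [mem_inter_iff, mem_ofPred_eq, LinearPMap.exists_inner_block_eq_iff hdense]
    tauto
  · have hT : ∀ ν : ℂ, ν ≠ 0 → ∀ c : ℝ,
        ∃ u : T.domain, ‖(u : E)‖ = 1 ∧ c < |(ν * ⟪T u, (u : E)⟫).im| := by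
      intro ν hν c
      by_contra! h
      exact hstrip ⟨ν, 0, c, hν, by simpa using h⟩
    obtain ⟨v, hv, rfl⟩ : z ∈ (T.blockForm X Y).numericalRange := by
      rw [LinearPMap.numericalRange_blockForm_eq_univ X Y hT]
      trivial
    refine ⟨v.fst, v.snd, ?_, rfl⟩
    rw [mem_sphere_zero_iff_norm] at hv
    simpa [hv] using (WithLp.prod_norm_sq_eq_of_L2 v).symm

/-- Let `T` be a closed densely defined operator whose numerical range is not
contained in any strip `{z : |Im (ν z + μ)| ≤ c}` (with `ν ≠ 0`).  Then for all bounded `X, Y`,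
the block operator `T̂ = [[T, X],[Y, −T]]` on `dom T ⊕ dom T` in `H ⊕ H` satisfies
`dom T̂ ∩ dom T̂* = (dom T ∩ dom T*) ⊕ (dom T ∩ dom T*)` and `W(T̂) = ℂ`. -/
theorem block_full_numerical_range
    {E : Type*} [NormedAddCommGroup E] [InnerProductSpace ℂ E] [CompleteSpace E]
    (T : E →ₗ.[ℂ] E)
    (hdense : Dense (T.domain : Set E))
    (hclosed : T.IsClosed)
    (hstrip : ¬ ∃ (ν μ : ℂ) (c : ℝ), ν ≠ 0 ∧
      ∀ u : T.domain, ‖(u : E)‖ = 1 → |(ν * ⟪T u, (u : E)⟫ + μ).im| ≤ c)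
    (X Y : E →L[ℂ] E) :
    -- `dom T̂ ∩ dom T̂* = (dom T ∩ dom T*) ⊕ (dom T ∩ dom T*)`
    ({p : E × E | p.1 ∈ T.domain ∧ p.2 ∈ T.domain} ∩
        {p : E × E | ∃ w1 w2 : E, ∀ u1 u2 : T.domain,
          ⟪T u1 + X (u2 : E), p.1⟫ + ⟪Y (u1 : E) - T u2, p.2⟫
            = ⟪(u1 : E), w1⟫ + ⟪(u2 : E), w2⟫}
      = {p : E × E | (p.1 ∈ T.domain ∧ p.1 ∈ T.adjoint.domain) ∧
          (p.2 ∈ T.domain ∧ p.2 ∈ T.adjoint.domain)}) ∧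
    -- `W(T̂) = ℂ`
    (∀ z : ℂ, ∃ u1 u2 : T.domain, ‖(u1 : E)‖ ^ 2 + ‖(u2 : E)‖ ^ 2 = 1 ∧
      ⟪T u1 + X (u2 : E), (u1 : E)⟫ + ⟪Y (u1 : E) - T u2, (u2 : E)⟫ = z) :=
  block_full_numerical_range_general T hdense hstrip X Y
end
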